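/- arXiv:1907.00107 — 9 statements merged into one kernel-verified Lean document; each statement's English description precedes it below -/
import Mathlib

section
/- For every integer 1 ≤ t ≤ T+1, the expectation of N_t satisfies E[N_t] ≤ log_{1/p}(1 + ∑_{s=1}^{t-1} p^{∑_{τ=1}^{s} w_τ}) + ∑_{s=1}^{t} w_s, where log_{1/p}(x) := ln(x)/ln(1/p). -/
open MeasureTheory Finset

/-- Lemma 1 (expectation bound for the exponentially-damped arrival process):
for every `1 ≤ t ≤ T+1`,
`E[N_t] ≤ log_{1/p}(1 + ∑_{s=1}^{t-1} p^{∑_{τ=1}^s w_τ}) + ∑_{s=1}^t w_s`. -/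
theorem stmt0
    {Ω : Type*} [MeasurableSpace Ω] (μ : Measure Ω) [IsProbabilityMeasure μ]
    (T : ℕ) (hT : 1 ≤ T) (p : ℝ) (hp0 : 0 < p) (hp1 : p < 1)
    (A : ℕ → Ω → ℝ)
    (hAmeas : ∀ t, 1 ≤ t → t ≤ T → Measurable (A t))
    (hA01 : ∀ t, 1 ≤ t → t ≤ T → ∀ ω, A t ω = 0 ∨ A t ω = 1)
    (w : ℕ → ℝ) (hw : ∀ t, 1 ≤ t → t ≤ T → 0 ≤ w t) (hwT : w (T + 1) = 0)
    (N : ℕ → Ω → ℝ)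
    (hN : ∀ t ω, N t ω = (∑ s ∈ Finset.Icc 1 (t - 1), (A s ω + w s)) + w t)
    (hcond : ∀ t, 1 ≤ t → t ≤ T →
      ∀ᵐ ω ∂μ,
        (μ[A t | MeasurableSpace.comap (N t) (inferInstance : MeasurableSpace ℝ)]) ω
          ≤ p ^ (N t ω + 1)) :
    ∀ t, 1 ≤ t → t ≤ T + 1 →
      (∫ ω, N t ω ∂μ) ≤
        Real.log (1 + ∑ s ∈ Finset.Icc 1 (t - 1), p ^ (∑ τ ∈ Finset.Icc 1 s, w τ)) /
            Real.log (1 / p)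
          + ∑ s ∈ Finset.Icc 1 t, w s := by
  set L : ℝ := -Real.log p with hLdef
  have hL : 0 < L := by
    have := Real.log_neg hp0 hp1; linarith
  -- nonnegativity of weights in range
  have hwnn : ∀ s, 1 ≤ s → s ≤ T + 1 → 0 ≤ w s := by
    intro s h1 h2
    rcases Nat.lt_or_ge s (T + 1) with h | h
    · exact hw s h1 (Nat.lt_succ_iff.mp h)
    · have : s = T + 1 := le_antisymm h2 h
      simp [this, hwT]
  -- bounds on A
  have hA0 : ∀ s, 1 ≤ s → s ≤ T → ∀ ω, 0 ≤ A s ω := by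
    intro s h1 h2 ω; rcases hA01 s h1 h2 ω with h | h <;> simp [h]
  have hA1 : ∀ s, 1 ≤ s → s ≤ T → ∀ ω, A s ω ≤ 1 := by
    intro s h1 h2 ω; rcases hA01 s h1 h2 ω with h | h <;> simp [h]
  -- measurability of N t
  have hNmeas : ∀ t, 1 ≤ t → t ≤ T + 1 → Measurable (N t) := by
    intro t h1 h2
    have : N t = fun ω => (∑ s ∈ Finset.Icc 1 (t - 1), (A s ω + w s)) + w t :=
      funext (hN t)
    rw [this]
    apply Measurable.add _ measurable_const
    apply Finset.measurable_sum
    intro s hs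
    simp only [Finset.mem_Icc] at hs
    exact (hAmeas s hs.1 (hs.2.trans (by omega))).add measurable_const
  -- nonnegativity of N t
  have hNnn : ∀ t, 1 ≤ t → t ≤ T + 1 → ∀ ω, 0 ≤ N t ω := by
    intro t h1 h2 ω
    rw [hN]
    have hsum : 0 ≤ ∑ s ∈ Finset.Icc 1 (t - 1), (A s ω + w s) := by
      apply Finset.sum_nonneg
      intro s hs
      simp only [Finset.mem_Icc] at hs
      have hsT : s ≤ T := hs.2.trans (by omega)
      exact add_nonneg (hA0 s hs.1 hsT ω) (hw s hs.1 hsT)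
    exact add_nonneg hsum (hwnn t h1 h2)
  -- upper bound on N t
  have hNub : ∀ t, 1 ≤ t → t ≤ T + 1 → ∀ ω,
      N t ω ≤ (∑ s ∈ Finset.Icc 1 (t - 1), (1 + w s)) + w t := by
    intro t h1 h2 ω
    rw [hN]
    apply add_le_add_left
    apply Finset.sum_le_sum
    intro s hs
    simp only [Finset.mem_Icc] at hs
    exact add_le_add_left (hA1 s hs.1 (hs.2.trans (by omega)) ω) _
  -- integrability of N t
  have hNint : ∀ t, 1 ≤ t → t ≤ T + 1 → Integrable (N t) μ := by
    intro t h1 h2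
    refine (integrable_const ((∑ s ∈ Finset.Icc 1 (t - 1), (1 + w s)) + w t)).mono'
      (hNmeas t h1 h2).aestronglyMeasurable (Filter.Eventually.of_forall fun ω => ?_)
    rw [Real.norm_eq_abs, abs_of_nonneg (hNnn t h1 h2 ω)]
    exact hNub t h1 h2 ω
  -- the exponential process
  set Y : ℕ → Ω → ℝ := fun t ω => Real.exp (L * N t ω) with hYdef
  have hYmeas : ∀ t, 1 ≤ t → t ≤ T + 1 → Measurable (Y t) := by
    intro t h1 h2
    exact ((hNmeas t h1 h2).const_mul L).exp
  have hYpos : ∀ t ω, 0 < Y t ω := fun t ω => Real.exp_pos _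
  have hYint : ∀ t, 1 ≤ t → t ≤ T + 1 → Integrable (Y t) μ := by
    intro t h1 h2
    refine (integrable_const (Real.exp (L * ((∑ s ∈ Finset.Icc 1 (t - 1), (1 + w s)) + w t)))).mono'
      (hYmeas t h1 h2).aestronglyMeasurable (Filter.Eventually.of_forall fun ω => ?_)
    rw [Real.norm_eq_abs, abs_of_pos (hYpos t ω)]
    exact Real.exp_le_exp.mpr (mul_le_mul_of_nonneg_left (hNub t h1 h2 ω) hL.le)
  -- abbreviations
  set W : ℕ → ℝ := fun t => ∑ τ ∈ Finset.Icc 1 t, w τ with hWdef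
  set S : ℕ → ℝ := fun k => ∑ s ∈ Finset.Icc 1 k, p ^ (W s) with hSdef
  set B : ℕ → ℝ := fun t => (1 + S (t - 1)) * Real.exp (L * W t) with hBdef
  have hSnn : ∀ k, 0 ≤ S k := by
    intro k
    apply Finset.sum_nonneg
    intro s _
    exact Real.rpow_nonneg hp0.le _
  -- main induction
  have key : ∀ t, 1 ≤ t → t ≤ T + 1 → (∫ ω, Y t ω ∂μ) ≤ B t := by
    intro t ht1
    induction t, ht1 using Nat.le_induction with
    | base =>
      intro _
      have hN1 : ∀ ω, N 1 ω = w 1 := by intro ω; simp [hN]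
      have : (fun ω => Y 1 ω) = fun _ : Ω => Real.exp (L * w 1) := by
        funext ω; simp [hYdef, hN1 ω]
      rw [this, integral_const, probReal_univ, one_smul]
      have hW1 : W 1 = w 1 := by simp [hWdef]
      have hS0 : S 0 = 0 := by simp [hSdef]
      simp [hBdef, hS0, hW1]
    | succ t ht1 IH =>
      intro ht2
      have htT : t ≤ T := by omega
      have ht2' : t ≤ T + 1 := by omega
      have hIH := IH ht2'
      -- recursion for N
      obtain ⟨u, rfl⟩ : ∃ u, t = u + 1 := ⟨t - 1, (Nat.succ_pred_eq_of_pos ht1).symm⟩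
      have hNstep : ∀ ω, N (u + 1 + 1) ω = N (u + 1) ω + A (u + 1) ω + w (u + 1 + 1) := by
        intro ω
        rw [hN, hN]
        simp only [Nat.add_sub_cancel]
        rw [Finset.sum_Icc_succ_top (Nat.le_add_left 1 u) (fun s => A s ω + w s)]
        ring
      set t := u + 1
      -- exp of A
      have hexpA : ∀ ω, Real.exp (L * A t ω) = 1 + (1 / p - 1) * A t ω := by
        intro ω
        rcases hA01 t ht1 htT ω with h | h
        · simp [h]
        · rw [h, mul_one, mul_one, hLdef, Real.exp_neg, Real.exp_log hp0]
          ring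
      -- conditional expectation step
      set m := MeasurableSpace.comap (N t) (inferInstance : MeasurableSpace ℝ) with hmdef
      have hm : m ≤ _ := (hNmeas t ht1 ht2').comap_le
      haveI : SigmaFinite (μ.trim hm) := by infer_instance
      have hNm : Measurable[m] (N t) := Measurable.of_comap_le le_rfl
      have hYsm : StronglyMeasurable[m] (Y t) := ((hNm.const_mul L).exp).stronglyMeasurable
      have hAint : Integrable (A t) μ := by
        refine (integrable_const (1 : ℝ)).mono'
          (hAmeas t ht1 htT).aestronglyMeasurable (Filter.Eventually.of_forall fun ω => ?_)
        rw [Real.norm_eq_abs, abs_of_nonneg (hA0 t ht1 htT ω)]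
        exact hA1 t ht1 htT ω
      have hYAint : Integrable (Y t * A t) μ := by
        refine (integrable_const (Real.exp (L * ((∑ s ∈ Finset.Icc 1 (t - 1), (1 + w s)) + w t)))).mono'
          ((hYmeas t ht1 ht2').mul (hAmeas t ht1 htT)).aestronglyMeasurable
          (Filter.Eventually.of_forall fun ω => ?_)
        rw [Real.norm_eq_abs, Pi.mul_apply,
          abs_of_nonneg (mul_nonneg (hYpos t ω).le (hA0 t ht1 htT ω))]
        calc Y t ω * A t ω ≤ Y t ω * 1 :=
              mul_le_mul_of_nonneg_left (hA1 t ht1 htT ω) (hYpos t ω).le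
          _ = Y t ω := mul_one _
          _ ≤ _ := Real.exp_le_exp.mpr (mul_le_mul_of_nonneg_left (hNub t ht1 ht2' ω) hL.le)
      have hpull : μ[Y t * A t | m] =ᵐ[μ] Y t * μ[A t | m] :=
        condExp_mul_of_stronglyMeasurable_left hYsm hYAint hAint
      have hconst : ∀ ω, Y t ω * p ^ (N t ω + 1) = p := by
        intro ω
        rw [hYdef]
        rw [Real.rpow_def_of_pos hp0, ← Real.exp_add]
        rw [show L * N t ω + Real.log p * (N t ω + 1) = Real.log p by rw [hLdef]; ring]
        exact Real.exp_log hp0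
      have hYA : (∫ ω, (Y t * A t) ω ∂μ) ≤ p := by
        have h2 : (∫ ω, (μ[Y t * A t | m]) ω ∂μ) = ∫ ω, (Y t * A t) ω ∂μ :=
          integral_condExp hm
        have h3 : (∫ ω, (Y t * μ[A t | m]) ω ∂μ) ≤ ∫ ω, Y t ω * p ^ (N t ω + 1) ∂μ := by
          apply integral_mono_ae
          · exact (integrable_condExp.congr hpull)
          · have : (fun ω => Y t ω * p ^ (N t ω + 1)) = fun _ => p := funext hconst
            rw [this]; exact integrable_const p
          · filter_upwards [hcond t ht1 htT] with ω h
            exact mul_le_mul_of_nonneg_left h (hYpos t ω).le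
        have h4 : (∫ ω, Y t ω * p ^ (N t ω + 1) ∂μ) = p := by
          have : (fun ω => Y t ω * p ^ (N t ω + 1)) = fun _ => p := funext hconst
          rw [this, integral_const, probReal_univ, one_smul]
        calc (∫ ω, (Y t * A t) ω ∂μ) = ∫ ω, (μ[Y t * A t | m]) ω ∂μ := h2.symm
          _ = ∫ ω, (Y t * μ[A t | m]) ω ∂μ := integral_congr_ae hpull
          _ ≤ _ := h3
          _ = p := h4
      -- recursion for the integral of Y
      have hYrec : (fun ω => Y (t + 1) ω) =
          fun ω => Real.exp (L * w (t + 1)) * (Y t ω + (1 / p - 1) * (Y t * A t) ω) := by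
        funext ω
        have : Y (t + 1) ω = Y t ω * Real.exp (L * A t ω) * Real.exp (L * w (t + 1)) := by
          rw [hYdef]; simp only []
          rw [hNstep ω, ← Real.exp_add, ← Real.exp_add]
          ring_nf
        rw [this, hexpA ω]
        simp only [Pi.mul_apply]
        ring
      have hint1 : (∫ ω, Y (t + 1) ω ∂μ) =
          Real.exp (L * w (t + 1)) * ((∫ ω, Y t ω ∂μ) + (1 / p - 1) * ∫ ω, (Y t * A t) ω ∂μ) := by
        rw [hYrec]
        rw [integral_const_mul]
        congr 1
        rw [integral_add (hYint t ht1 ht2') (hYAint.const_mul _), integral_const_mul]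
      have hp1' : (0:ℝ) ≤ 1 / p - 1 := by
        have : 1 ≤ 1 / p := by rw [le_div_iff₀ hp0]; linarith
        linarith
      have hbd : (∫ ω, Y (t + 1) ω ∂μ) ≤ Real.exp (L * w (t + 1)) * (B t + 1) := by
        rw [hint1]
        apply mul_le_mul_of_nonneg_left _ (Real.exp_pos _).le
        have h5 : (1 / p - 1) * (∫ ω, (Y t * A t) ω ∂μ) ≤ (1 / p - 1) * p :=
          mul_le_mul_of_nonneg_left hYA hp1'
        have h6 : (1 / p - 1) * p = 1 - p := by field_simp
        nlinarith [hIH]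
      -- recursion for B
      have hBrec : B (t + 1) = Real.exp (L * w (t + 1)) * (B t + 1) := by
        have hWstep : W (t + 1) = W t + w (t + 1) := by
          rw [hWdef]
          exact Finset.sum_Icc_succ_top (Nat.le_add_left 1 t) w
        have hSstep : S t = S (t - 1) + p ^ (W t) := by
          rw [hSdef]
          simp only []
          show ∑ s ∈ Finset.Icc 1 (u + 1), p ^ (W s) = _
          rw [Finset.sum_Icc_succ_top (Nat.le_add_left 1 u) (fun s => p ^ (W s))]
          rfl
        have hcancel : p ^ (W t) * Real.exp (L * W t) = 1 := by
          rw [Real.rpow_def_of_pos hp0, ← Real.exp_add,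
            show Real.log p * W t + L * W t = 0 by rw [hLdef]; ring, Real.exp_zero]
        rw [hBdef]
        simp only [Nat.add_sub_cancel]
        rw [hSstep, hWstep, mul_add (L : ℝ), Real.exp_add]
        linear_combination Real.exp (L * w (t + 1)) * hcancel
      rw [hBrec]
      exact hbd
  -- conclude via the tangent-line trick
  intro t ht1 ht2
  set a : ℝ := ∫ ω, N t ω ∂μ with hadef
  have htangent : ∀ ω, Real.exp (L * a) + Real.exp (L * a) * (L * (N t ω - a)) ≤ Y t ω := by
    intro ω
    have h := Real.add_one_le_exp (L * (N t ω - a))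
    have : Real.exp (L * a) * (L * (N t ω - a) + 1) ≤ Real.exp (L * a) * Real.exp (L * (N t ω - a)) :=
      mul_le_mul_of_nonneg_left h (Real.exp_pos _).le
    calc Real.exp (L * a) + Real.exp (L * a) * (L * (N t ω - a))
        = Real.exp (L * a) * (L * (N t ω - a) + 1) := by ring
      _ ≤ Real.exp (L * a) * Real.exp (L * (N t ω - a)) := this
      _ = Real.exp (L * a + L * (N t ω - a)) := (Real.exp_add _ _).symm
      _ = Y t ω := by rw [hYdef]; ring_nf
  have hlow : Real.exp (L * a) ≤ ∫ ω, Y t ω ∂μ := by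
    have hi1 : Integrable (fun ω => Real.exp (L * a) + Real.exp (L * a) * (L * (N t ω - a))) μ := by
      apply Integrable.add (integrable_const _)
      apply Integrable.const_mul
      exact ((hNint t ht1 ht2).sub (integrable_const a)).const_mul L
    have h := integral_mono hi1 (hYint t ht1 ht2) htangent
    have hrw : (fun ω => Real.exp (L * a) + Real.exp (L * a) * (L * (N t ω - a)))
        = fun ω => (Real.exp (L * a) * (1 - L * a)) + (Real.exp (L * a) * L) * N t ω := by
      funext ω; ring
    have hcomp : (∫ ω, (Real.exp (L * a) + Real.exp (L * a) * (L * (N t ω - a))) ∂μ)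
        = Real.exp (L * a) := by
      rw [hrw, integral_add (integrable_const _) ((hNint t ht1 ht2).const_mul _),
        integral_const, probReal_univ, one_smul, integral_const_mul, ← hadef]
      ring
    calc Real.exp (L * a)
        = ∫ ω, (Real.exp (L * a) + Real.exp (L * a) * (L * (N t ω - a))) ∂μ := hcomp.symm
      _ ≤ _ := h
  have hupper : Real.exp (L * a) ≤ (1 + S (t - 1)) * Real.exp (L * W t) :=
    hlow.trans (key t ht1 ht2)
  have hpos : (0:ℝ) < 1 + S (t - 1) := by have := hSnn (t - 1); linarith
  have hlog : L * a ≤ Real.log (1 + S (t - 1)) + L * W t := by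
    have := Real.log_le_log (Real.exp_pos _) hupper
    rwa [Real.log_exp, Real.log_mul hpos.ne' (Real.exp_pos _).ne', Real.log_exp] at this
  have hfin : a ≤ Real.log (1 + S (t - 1)) / L + W t := by
    rw [div_add' _ _ _ hL.ne']
    rw [le_div_iff₀ hL]
    nlinarith [hlog]
  have hLlog : Real.log (1 / p) = L := by
    rw [one_div, Real.log_inv, hLdef]
  rw [hLlog]
  exact hfin
end

section
/- For every integer 1 ≤ t ≤ T+1, E[p^{-N_t}] ≤ ∑_{s=1}^{t} p^{-∑_{τ=s}^{t} w_τ}. -/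
open MeasureTheory Finset


private lemma aux_condexp_bound {Ω : Type*} {m m0 : MeasurableSpace Ω}
    (hm : m ≤ m0) (μ : @MeasureTheory.Measure Ω m0) [IsProbabilityMeasure μ]
    {f g b : Ω → ℝ}
    (hfm : StronglyMeasurable[m] f) (hf_nonneg : ∀ ω, 0 ≤ f ω)
    (hIntfg : MeasureTheory.Integrable (f * g) μ) (hIntg : MeasureTheory.Integrable g μ)
    (hIntfb : MeasureTheory.Integrable (fun ω => f ω * b ω) μ)
    (hf_bdd : ∃ C, ∀ ω, ‖f ω‖ ≤ C)
    (hbound : ∀ᵐ ω ∂μ, (μ[g|m]) ω ≤ b ω) :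
    (∫ ω, f ω * g ω ∂μ) ≤ ∫ ω, f ω * b ω ∂μ := by
  haveI : SigmaFinite (μ.trim hm) := inferInstance
  have h1 : (∫ ω, f ω * g ω ∂μ) = ∫ ω, (μ[f * g|m]) ω ∂μ :=
    (integral_condExp hm).symm
  have h2 : μ[f * g|m] =ᵐ[μ] f * μ[g|m] :=
    condExp_mul_of_stronglyMeasurable_left hfm hIntfg hIntg
  have h3 : (∫ ω, (μ[f * g|m]) ω ∂μ) = ∫ ω, f ω * (μ[g|m]) ω ∂μ :=
    integral_congr_ae h2
  have hfae : MeasureTheory.AEStronglyMeasurable f μ :=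
    (hfm.mono hm).aestronglyMeasurable
  have hIntc : MeasureTheory.Integrable (fun ω => f ω * (μ[g|m]) ω) μ :=
    integrable_condExp.bdd_mul hfae (ae_of_all _ hf_bdd.choose_spec)
  have h4 : (∫ ω, f ω * (μ[g|m]) ω ∂μ) ≤ ∫ ω, f ω * b ω ∂μ := by
    refine integral_mono_ae hIntc hIntfb ?_
    filter_upwards [hbound] with ω hω
    exact mul_le_mul_of_nonneg_left hω (hf_nonneg ω)
  calc (∫ ω, f ω * g ω ∂μ) = ∫ ω, f ω * (μ[g|m]) ω ∂μ := by rw [h1, h3]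
    _ ≤ ∫ ω, f ω * b ω ∂μ := h4

/-- For every `1 ≤ t ≤ T+1`, `E[p^{-N_t}] ≤ ∑_{s=1}^{t} p^{-∑_{τ=s}^{t} w_τ}`. -/
theorem stmt1
    {Ω : Type*} [MeasurableSpace Ω] (μ : Measure Ω) [IsProbabilityMeasure μ]
    (T : ℕ) (hT : 1 ≤ T) (p : ℝ) (hp0 : 0 < p) (hp1 : p < 1)
    (A : ℕ → Ω → ℝ)
    (hAmeas : ∀ t, 1 ≤ t → t ≤ T → Measurable (A t))
    (hA01 : ∀ t, 1 ≤ t → t ≤ T → ∀ ω, A t ω = 0 ∨ A t ω = 1)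
    (w : ℕ → ℝ) (hw : ∀ t, 1 ≤ t → t ≤ T → 0 ≤ w t) (hwT : w (T + 1) = 0)
    (N : ℕ → Ω → ℝ)
    (hN : ∀ t ω, N t ω = (∑ s ∈ Finset.Icc 1 (t - 1), (A s ω + w s)) + w t)
    (hcond : ∀ t, 1 ≤ t → t ≤ T →
      ∀ᵐ ω ∂μ,
        (μ[A t | MeasurableSpace.comap (N t) (inferInstance : MeasurableSpace ℝ)]) ω
          ≤ p ^ (N t ω + 1)) :
    ∀ t, 1 ≤ t → t ≤ T + 1 →
      (∫ ω, p ^ (-(N t ω)) ∂μ) ≤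
        ∑ s ∈ Finset.Icc 1 t, p ^ (-(∑ τ ∈ Finset.Icc s t, w τ)) := by
  -- basic facts
  have hA0 : ∀ s, 1 ≤ s → s ≤ T → ∀ ω, 0 ≤ A s ω ∧ A s ω ≤ 1 := by
    intro s h1 h2 ω
    rcases hA01 s h1 h2 ω with h | h <;> rw [h] <;> constructor <;> norm_num
  have hw' : ∀ s, 1 ≤ s → s ≤ T + 1 → 0 ≤ w s := by
    intro s h1 h2
    by_cases h : s ≤ T
    · exact hw s h1 h
    · have : s = T + 1 := by omega
      rw [this, hwT]
  have hcont : Continuous (fun x : ℝ => p ^ x) :=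
    continuous_iff_continuousAt.2 fun x => Real.continuousAt_const_rpow hp0.ne'
  have hNmeas : ∀ t, t ≤ T + 1 → Measurable (N t) := by
    intro t ht
    have hfe : N t = fun ω => (∑ s ∈ Finset.Icc 1 (t - 1), (A s ω + w s)) + w t :=
      funext (hN t)
    rw [hfe]
    refine Measurable.add ?_ measurable_const
    refine Finset.measurable_sum _ ?_
    intro s hs
    simp only [Finset.mem_Icc] at hs
    exact (hAmeas s hs.1 (by omega)).add measurable_const
  -- bound on N
  have hNb : ∀ t, 1 ≤ t → t ≤ T + 1 → ∀ ω,
      0 ≤ N t ω ∧ N t ω ≤ (t - 1 : ℕ) + ((∑ s ∈ Finset.Icc 1 (t - 1), w s) + w t) := by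
    intro t h1 h2 ω
    have hmem : ∀ s ∈ Finset.Icc 1 (t - 1), (1 ≤ s ∧ s ≤ T) := by
      intro s hs; simp only [Finset.mem_Icc] at hs; omega
    constructor
    · rw [hN]
      have h1' : (0:ℝ) ≤ ∑ s ∈ Finset.Icc 1 (t - 1), (A s ω + w s) := by
        refine Finset.sum_nonneg fun s hs => ?_
        obtain ⟨hs1, hs2⟩ := hmem s hs
        exact add_nonneg (hA0 s hs1 hs2 ω).1 (hw s hs1 hs2)
      have := hw' t h1 h2
      linarith
    · rw [hN]
      have h1' : ∑ s ∈ Finset.Icc 1 (t - 1), (A s ω + w s)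
          ≤ ∑ s ∈ Finset.Icc 1 (t - 1), (1 + w s) := by
        refine Finset.sum_le_sum fun s hs => ?_
        obtain ⟨hs1, hs2⟩ := hmem s hs
        linarith [(hA0 s hs1 hs2 ω).2]
      have h2' : ∑ s ∈ Finset.Icc 1 (t - 1), ((1:ℝ) + w s)
          = (t - 1 : ℕ) + ∑ s ∈ Finset.Icc 1 (t - 1), w s := by
        rw [Finset.sum_add_distrib, Finset.sum_const, Nat.card_Icc]
        simp
      rw [h2'] at h1'
      linarith
  -- integrability of p^{-N t}
  have hrpow_nonneg : ∀ x : ℝ, 0 ≤ p ^ x := fun x => Real.rpow_nonneg hp0.le x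
  have hIntN : ∀ t, 1 ≤ t → t ≤ T + 1 → Integrable (fun ω => p ^ (-(N t ω))) μ := by
    intro t h1 h2
    have hmeas : Measurable (fun ω => p ^ (-(N t ω))) :=
      hcont.measurable.comp (hNmeas t h2).neg
    refine Integrable.mono' (integrable_const
      (p ^ (-((t - 1 : ℕ) + ((∑ s ∈ Finset.Icc 1 (t - 1), w s) + w t)))))
      hmeas.aestronglyMeasurable (ae_of_all _ fun ω => ?_)
    rw [Real.norm_eq_abs, abs_of_nonneg (hrpow_nonneg _)]
    obtain ⟨hl, hr⟩ := hNb t h1 h2 ω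
    exact Real.rpow_le_rpow_of_exponent_ge hp0 hp1.le (by linarith)
  -- main induction
  intro t ht1
  induction t, ht1 using Nat.le_induction with
  | base =>
    intro _
    have hN1 : ∀ ω, N 1 ω = w 1 := by
      intro ω; rw [hN]; simp
    have : (fun ω => p ^ (-(N 1 ω))) = fun _ : Ω => p ^ (-(w 1)) := by
      funext ω; rw [hN1]
    rw [this, integral_const]
    simp
  | succ t ht IH =>
    intro ht2
    have htT : t ≤ T := by omega
    have IH' := IH (by omega)
    -- step identity
    have hstep : ∀ ω, N (t + 1) ω = N t ω + A t ω + w (t + 1) := by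
      intro ω
      rw [hN, hN]
      have hsplit : ∑ s ∈ Finset.Icc 1 (t + 1 - 1), (A s ω + w s)
          = (∑ s ∈ Finset.Icc 1 (t - 1), (A s ω + w s)) + (A t ω + w t) := by
        have h : t + 1 - 1 = (t - 1) + 1 := by omega
        have h2 : (t - 1) + 1 = t := by omega
        rw [h, Finset.sum_Icc_succ_top (by omega), h2]
      rw [hsplit]
      ring
    have hm : MeasurableSpace.comap (N t) (inferInstance : MeasurableSpace ℝ)
        ≤ (inferInstance : MeasurableSpace Ω) :=
      measurable_iff_comap_le.mp (hNmeas t (by omega))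
    set f : Ω → ℝ := fun ω => p ^ (-(N t ω)) with hf_def
    have hNm : Measurable[MeasurableSpace.comap (N t) (inferInstance : MeasurableSpace ℝ)]
        (N t) := measurable_iff_comap_le.mpr le_rfl
    have hfm : StronglyMeasurable[MeasurableSpace.comap (N t)
        (inferInstance : MeasurableSpace ℝ)] f :=
      (hcont.measurable.comp hNm.neg).stronglyMeasurable
    have hfmeas : Measurable f := hcont.measurable.comp (hNmeas t (by omega)).neg
    have hf_nonneg : ∀ ω, 0 ≤ f ω := fun ω => hrpow_nonneg _
    have hf_bdd : ∀ ω, ‖f ω‖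
        ≤ p ^ (-((t - 1 : ℕ) + ((∑ s ∈ Finset.Icc 1 (t - 1), w s) + w t))) := by
      intro ω
      rw [Real.norm_eq_abs, abs_of_nonneg (hf_nonneg ω)]
      exact Real.rpow_le_rpow_of_exponent_ge hp0 hp1.le
        (by linarith [(hNb t (by omega) (by omega) ω).2])
    have hIntA : Integrable (A t) μ := by
      refine Integrable.mono' (integrable_const 1)
        (hAmeas t (by omega) htT).aestronglyMeasurable (ae_of_all _ fun ω => ?_)
      rw [Real.norm_eq_abs]
      obtain ⟨h1, h2⟩ := hA0 t (by omega) htT ω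
      rw [abs_of_nonneg h1]; exact h2
    have hIntfA : Integrable (f * A t) μ :=
      hIntA.bdd_mul hfmeas.aestronglyMeasurable (ae_of_all _ hf_bdd)
    -- conditional expectation bound : ∫ f * A t ≤ p
    have hkey : (∫ ω, f ω * A t ω ∂μ) ≤ p := by
      have h5 : ∀ ω, f ω * p ^ (N t ω + 1) = p := by
        intro ω
        rw [hf_def]
        rw [← Real.rpow_add hp0]
        norm_num
      have h5' : (fun ω => f ω * p ^ (N t ω + 1)) = fun _ => p := funext h5
      have hIntfb : Integrable (fun ω => f ω * p ^ (N t ω + 1)) μ := by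
        rw [h5']; exact integrable_const p
      have hmain := aux_condexp_bound hm μ hfm hf_nonneg hIntfA hIntA hIntfb
        ⟨_, hf_bdd⟩ (hcond t (by omega) htT)
      calc (∫ ω, f ω * A t ω ∂μ) ≤ ∫ ω, f ω * p ^ (N t ω + 1) ∂μ := hmain
        _ = p := by rw [h5', integral_const]; simp
    -- expand integrand at t+1
    have hq : 0 ≤ p⁻¹ - 1 := by
      have : 1 < p⁻¹ := (one_lt_inv₀ hp0).mpr hp1
      linarith
    have hpt : ∀ ω, p ^ (-(N (t + 1) ω))
        = p ^ (-(w (t + 1))) * (f ω + (p⁻¹ - 1) * (f ω * A t ω)) := by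
      intro ω
      rw [hstep ω]
      have hAexp : p ^ (-(A t ω)) = 1 + (p⁻¹ - 1) * A t ω := by
        rcases hA01 t (by omega) htT ω with h | h <;> rw [h]
        · simp
        · rw [Real.rpow_neg_one]; ring
      have : (-(N t ω + A t ω + w (t + 1)))
          = (-(w (t + 1))) + ((-(N t ω)) + (-(A t ω))) := by ring
      rw [this, Real.rpow_add hp0, Real.rpow_add hp0, hAexp, hf_def]
      ring
    have hIntegrand : (∫ ω, p ^ (-(N (t + 1) ω)) ∂μ)
        = p ^ (-(w (t + 1))) * ((∫ ω, f ω ∂μ) + (p⁻¹ - 1) * ∫ ω, f ω * A t ω ∂μ) := by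
      have he : (fun ω => p ^ (-(N (t + 1) ω)))
          = fun ω => p ^ (-(w (t + 1))) * (f ω + (p⁻¹ - 1) * (f ω * A t ω)) :=
        funext hpt
      have hIntN' : Integrable f μ := hIntN t (by omega) (by omega)
      have h7 : ∫ ω, (f ω + (p⁻¹ - 1) * (f ω * A t ω)) ∂μ
          = (∫ ω, f ω ∂μ) + ∫ ω, (p⁻¹ - 1) * (f ω * A t ω) ∂μ :=
        integral_add hIntN' (hIntfA.const_mul _)
      have h8 : ∫ ω, (p⁻¹ - 1) * (f ω * A t ω) ∂μ
          = (p⁻¹ - 1) * ∫ ω, f ω * A t ω ∂μ := integral_const_mul _ _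
      rw [he, integral_const_mul, h7, h8]
    -- RHS identity
    have hRHS : (∑ s ∈ Finset.Icc 1 (t + 1), p ^ (-(∑ τ ∈ Finset.Icc s (t + 1), w τ)))
        = p ^ (-(w (t + 1))) *
          ((∑ s ∈ Finset.Icc 1 t, p ^ (-(∑ τ ∈ Finset.Icc s t, w τ))) + 1) := by
      rw [Finset.sum_Icc_succ_top (by omega)]
      have h1 : ∀ s ∈ Finset.Icc 1 t, p ^ (-(∑ τ ∈ Finset.Icc s (t + 1), w τ))
          = p ^ (-(w (t + 1))) * p ^ (-(∑ τ ∈ Finset.Icc s t, w τ)) := by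
        intro s hs
        simp only [Finset.mem_Icc] at hs
        rw [Finset.sum_Icc_succ_top (by omega)]
        rw [show (-((∑ τ ∈ Finset.Icc s t, w τ) + w (t + 1)))
            = (-(w (t + 1))) + (-(∑ τ ∈ Finset.Icc s t, w τ)) by ring]
        rw [Real.rpow_add hp0]
      rw [Finset.sum_congr rfl h1]
      rw [show ∑ τ ∈ Finset.Icc (t + 1) (t + 1), w τ = w (t + 1) by simp]
      rw [← Finset.mul_sum]
      ring
    rw [hIntegrand, hRHS]
    have hmono : (∫ ω, f ω ∂μ) + (p⁻¹ - 1) * ∫ ω, f ω * A t ω ∂μ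
        ≤ (∑ s ∈ Finset.Icc 1 t, p ^ (-(∑ τ ∈ Finset.Icc s t, w τ))) + 1 := by
      have h1 : (p⁻¹ - 1) * (∫ ω, f ω * A t ω ∂μ) ≤ (p⁻¹ - 1) * p :=
        mul_le_mul_of_nonneg_left hkey hq
      have h2 : (p⁻¹ - 1) * p = 1 - p := by field_simp
      have h3 : (∫ ω, f ω ∂μ) ≤ ∑ s ∈ Finset.Icc 1 t, p ^ (-(∑ τ ∈ Finset.Icc s t, w τ)) :=
        IH'
      linarith
    exact mul_le_mul_of_nonneg_left hmono (hrpow_nonneg _)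
end

section
/- For every integer 2 ≤ t ≤ T+1, almost surely E[p^{-N_t} | N_{t-1}] ≤ p^{-w_t} · (1 + p^{-N_{t-1}}). -/
open MeasureTheory Finset

/-- For every `2 ≤ t ≤ T+1`, almost surely
`E[p^{-N_t} | N_{t-1}] ≤ p^{-w_t} · (1 + p^{-N_{t-1}})`. -/
theorem stmt2
    {Ω : Type*} [MeasurableSpace Ω] (μ : Measure Ω) [IsProbabilityMeasure μ]
    (T : ℕ) (hT : 1 ≤ T) (p : ℝ) (hp0 : 0 < p) (hp1 : p < 1)
    (A : ℕ → Ω → ℝ)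
    (hAmeas : ∀ t, 1 ≤ t → t ≤ T → Measurable (A t))
    (hA01 : ∀ t, 1 ≤ t → t ≤ T → ∀ ω, A t ω = 0 ∨ A t ω = 1)
    (w : ℕ → ℝ) (hw : ∀ t, 1 ≤ t → t ≤ T → 0 ≤ w t) (hwT : w (T + 1) = 0)
    (N : ℕ → Ω → ℝ)
    (hN : ∀ t ω, N t ω = (∑ s ∈ Finset.Icc 1 (t - 1), (A s ω + w s)) + w t)
    (hcond : ∀ t, 1 ≤ t → t ≤ T →
      ∀ᵐ ω ∂μ,
        (μ[A t | MeasurableSpace.comap (N t) (inferInstance : MeasurableSpace ℝ)]) ω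
          ≤ p ^ (N t ω + 1)) :
    ∀ t, 2 ≤ t → t ≤ T + 1 →
      ∀ᵐ ω ∂μ,
        (μ[fun ω' => p ^ (-(N t ω')) |
            MeasurableSpace.comap (N (t - 1)) (inferInstance : MeasurableSpace ℝ)]) ω
          ≤ p ^ (-(w t)) * (1 + p ^ (-(N (t - 1) ω))) := by
  intro t ht2 htT
  have hwnn : ∀ u, 1 ≤ u → u ≤ T + 1 → 0 ≤ w u := by
    intro u h1 h2
    rcases eq_or_lt_of_le h2 with h | h
    · rw [h, hwT]
    · exact hw u h1 (by omega)
  obtain ⟨s, rfl⟩ : ∃ s, t = s + 1 := ⟨t - 1, by omega⟩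
  simp only [Nat.add_sub_cancel]
  have hs1 : 1 ≤ s := by omega
  have hsT : s ≤ T := by omega
  -- rpow as exp
  have hrpow_meas : Measurable fun y : ℝ => p ^ y := by
    have : (fun y : ℝ => p ^ y) = fun y => Real.exp (Real.log p * y) :=
      funext fun y => Real.rpow_def_of_pos hp0 y
    rw [this]
    exact Real.measurable_exp.comp (measurable_const.mul measurable_id)
  -- measurability of N r
  have hNmeas : ∀ r, r ≤ T + 1 → Measurable (N r) := by
    intro r hr
    have : N r = fun ω => (∑ u ∈ Finset.Icc 1 (r - 1), (A u ω + w u)) + w r :=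
      funext fun ω => hN r ω
    rw [this]
    refine Measurable.add ?_ measurable_const
    refine Finset.measurable_sum _ fun u hu => ?_
    simp only [Finset.mem_Icc] at hu
    exact (hAmeas u hu.1 (by omega)).add measurable_const
  have hNs : Measurable (N s) := hNmeas s (by omega)
  -- bound on N r
  have hNbound : ∀ r, 1 ≤ r → r ≤ T + 1 → ∃ B : ℝ, ∀ ω, 0 ≤ N r ω ∧ N r ω ≤ B := by
    intro r hr1 hr
    refine ⟨(r - 1 : ℕ) + (∑ u ∈ Finset.Icc 1 (r - 1), w u) + w r, fun ω => ?_⟩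
    rw [hN r ω]
    have key : ∀ u ∈ Finset.Icc 1 (r - 1), w u ≤ A u ω + w u ∧ A u ω + w u ≤ 1 + w u := by
      intro u hu
      simp only [Finset.mem_Icc] at hu
      rcases hA01 u hu.1 (by omega) ω with h | h <;> rw [h] <;>
        exact ⟨by linarith, by linarith⟩
    constructor
    · have h1 : 0 ≤ ∑ u ∈ Finset.Icc 1 (r - 1), (A u ω + w u) := by
        refine Finset.sum_nonneg fun u hu => ?_
        have h2 := (key u hu).1
        have hu' := hu
        simp only [Finset.mem_Icc] at hu'
        have := hwnn u hu'.1 (by omega)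
        linarith
      have := hwnn r hr1 hr
      linarith
    · have h1 : (∑ u ∈ Finset.Icc 1 (r - 1), (A u ω + w u)) ≤
          ∑ u ∈ Finset.Icc 1 (r - 1), ((1 : ℝ) + w u) :=
        Finset.sum_le_sum fun u hu => (key u hu).2
      have h2 : (∑ u ∈ Finset.Icc 1 (r - 1), ((1 : ℝ) + w u)) =
          (r - 1 : ℕ) + ∑ u ∈ Finset.Icc 1 (r - 1), w u := by
        rw [Finset.sum_add_distrib, Finset.sum_const, Nat.card_Icc]
        simp
      linarith [h1, h2.le]
  -- integrability of p^(-N r)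
  have hIntN : ∀ r, 1 ≤ r → r ≤ T + 1 → Integrable (fun ω => p ^ (-(N r ω))) μ := by
    intro r hr1 hr
    obtain ⟨B, hB⟩ := hNbound r hr1 hr
    have hmeas : Measurable fun ω => p ^ (-(N r ω)) :=
      hrpow_meas.comp (hNmeas r hr).neg
    refine (memLp_top_of_bound (μ := μ) hmeas.aestronglyMeasurable (p ^ (-B))
      (ae_of_all _ fun ω => ?_)).integrable le_top
    have h1 : (0 : ℝ) < p ^ (-(N r ω)) := Real.rpow_pos_of_pos hp0 _
    rw [Real.norm_eq_abs, abs_of_pos h1]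
    exact Real.rpow_le_rpow_of_exponent_ge hp0 hp1.le (by linarith [(hB ω).2])
  -- integrability of A s and p^(-A s)
  have hpin : (0 : ℝ) < p⁻¹ := inv_pos.mpr hp0
  have hIntA : Integrable (A s) μ := by
    refine (memLp_top_of_bound (μ := μ) (hAmeas s hs1 hsT).aestronglyMeasurable 1
      (ae_of_all _ fun ω => ?_)).integrable le_top
    rcases hA01 s hs1 hsT ω with h | h <;> simp [h]
  have hIntpA : Integrable (fun ω => p ^ (-(A s ω))) μ := by
    refine (memLp_top_of_bound (μ := μ)
      (hrpow_meas.comp (hAmeas s hs1 hsT).neg).aestronglyMeasurable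
      (1 + p⁻¹) (ae_of_all _ fun ω => ?_)).integrable le_top
    rcases hA01 s hs1 hsT ω with h | h
    · simp only [Function.comp_apply, Pi.neg_apply, h, neg_zero, Real.rpow_zero, Real.norm_eq_abs, abs_one]
      linarith
    · simp only [Function.comp_apply, Pi.neg_apply, h, Real.rpow_neg_one, Real.norm_eq_abs, abs_of_pos hpin]
      linarith
  -- decomposition N (s+1) = N s + A s + w (s+1)
  have hNts : ∀ ω, N (s + 1) ω = N s ω + A s ω + w (s + 1) := by
    intro ω
    rw [hN (s + 1) ω, hN s ω]
    simp only [Nat.add_sub_cancel]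
    have hsum : (∑ u ∈ Finset.Icc 1 s, (A u ω + w u)) =
        (∑ u ∈ Finset.Icc 1 (s - 1), (A u ω + w u)) + (A s ω + w s) := by
      conv_lhs => rw [← Nat.sub_add_cancel hs1]
      rw [Finset.sum_Icc_succ_top (by omega)]
      rw [Nat.sub_add_cancel hs1]
    rw [hsum]
    ring
  -- pointwise product decomposition
  have heq1 : (fun ω => p ^ (-(N (s + 1) ω))) =
      (fun ω => p ^ (-(w (s + 1))) * p ^ (-(N s ω))) * (fun ω => p ^ (-(A s ω))) := by
    funext ω
    simp only [Pi.mul_apply]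
    rw [hNts ω, show -(N s ω + A s ω + w (s + 1)) = -(w (s + 1)) + -(N s ω) + -(A s ω) by ring,
      Real.rpow_add hp0, Real.rpow_add hp0]
  have hmle : MeasurableSpace.comap (N s) (inferInstance : MeasurableSpace ℝ)
      ≤ (inferInstance : MeasurableSpace Ω) := hNs.comap_le
  set m := MeasurableSpace.comap (N s) (inferInstance : MeasurableSpace ℝ) with hm
  -- strongly measurable wrt m
  have hNsm : Measurable[m] (N s) := measurable_iff_comap_le.mpr hm.ge
  have hfsm : StronglyMeasurable[m] fun ω => p ^ (-(w (s + 1))) * p ^ (-(N s ω)) :=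
    ((measurable_const.mul (hrpow_meas.comp measurable_neg)).comp hNsm).stronglyMeasurable
  -- pull-out property
  have hIntProd : Integrable
      ((fun ω => p ^ (-(w (s + 1))) * p ^ (-(N s ω))) * fun ω => p ^ (-(A s ω))) μ := by
    rw [← heq1]; exact hIntN (s + 1) (by omega) htT
  have key := condExp_mul_of_stronglyMeasurable_left (μ := μ) hfsm hIntProd hIntpA
  -- conditional expectation of p^(-A s)
  have hgdecomp : (fun ω => p ^ (-(A s ω))) =
      (fun _ : Ω => (1 : ℝ)) + (p⁻¹ - 1) • A s := by
    funext ω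
    simp only [Pi.add_apply, Pi.smul_apply, smul_eq_mul]
    rcases hA01 s hs1 hsT ω with h | h <;> rw [h] <;> simp [Real.rpow_neg_one]
  have hcA : μ[(fun ω => p ^ (-(A s ω))) | m] =ᵐ[μ]
      (fun _ : Ω => (1 : ℝ)) + (p⁻¹ - 1) • μ[A s | m] := by
    rw [hgdecomp]
    refine (condExp_add (integrable_const 1) (hIntA.smul (p⁻¹ - 1)) m).trans ?_
    exact Filter.EventuallyEq.add
      (Filter.EventuallyEq.of_eq (condExp_const (μ := μ) hmle (1 : ℝ)))
      (condExp_smul (p⁻¹ - 1) (A s) m)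
  -- combine
  have hcondS := hcond s hs1 hsT
  rw [heq1]
  filter_upwards [key, hcA, hcondS] with ω h1 h2 h3
  rw [h1]
  simp only [Pi.mul_apply, Pi.add_apply, Pi.smul_apply, smul_eq_mul] at h2 ⊢
  rw [h2]
  -- final arithmetic
  set a := p ^ (-(w (s + 1))) with ha
  set b := p ^ (-(N s ω)) with hb
  set c := (μ[A s | m]) ω with hc
  set d := p ^ (N s ω + 1) with hd
  have hbd : b * d = p := by
    rw [hb, hd, ← Real.rpow_add hp0]
    norm_num
  have hq : (p⁻¹ - 1) * p = 1 - p := by field_simp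
  have ha0 : 0 ≤ a := (Real.rpow_pos_of_pos hp0 _).le
  have hb0 : 0 ≤ b := (Real.rpow_pos_of_pos hp0 _).le
  have hq0 : 0 ≤ p⁻¹ - 1 := by
    have : 1 ≤ p⁻¹ := one_le_inv_iff₀.mpr ⟨hp0, hp1.le⟩
    linarith
  have hcd : c ≤ d := h3
  calc a * b * (1 + (p⁻¹ - 1) * c) ≤ a * b * (1 + (p⁻¹ - 1) * d) := by
        have h4 := mul_nonneg (mul_nonneg ha0 hb0) (mul_nonneg hq0 (sub_nonneg.mpr hcd))
        nlinarith
    _ = a * (b + (1 - p)) := by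
        have h5 : a * b * (1 + (p⁻¹ - 1) * d) = a * b + a * ((p⁻¹ - 1) * (b * d)) := by ring
        rw [h5, hbd, hq]; ring
    _ ≤ a * (1 + b) := by
        have : b + (1 - p) ≤ 1 + b := by linarith
        exact mul_le_mul_of_nonneg_left this ha0
end

section
/- For any measurable function Ψ : 𝕏 → {0,1}, one has ρ0{x : Ψ(x) = 1} + ρ1{x : Ψ(x) = 0} ≥ (1/2) · exp(−KL(ρ0, ρ1)). -/
open MeasureTheory
open scoped ENNReal

/-- The Kullback–Leibler divergence `∫ log(dρ0/dρ1) dρ0`, as an extended real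
(equal to `⊤` when the log-likelihood ratio is not integrable). -/
noncomputable def klDivE {𝕏 : Type*} [MeasurableSpace 𝕏] (ρ0 ρ1 : Measure 𝕏) : EReal :=
  open scoped Classical in
  if Integrable (llr ρ0 ρ1) ρ0 then ((∫ x, llr ρ0 ρ1 x ∂ρ0 : ℝ) : EReal) else ⊤

/-- For any measurable `Ψ : 𝕏 → {0,1}`,
`ρ0{Ψ = 1} + ρ1{Ψ = 0} ≥ (1/2) · exp(−KL(ρ0, ρ1))`. -/
theorem stmt3 {𝕏 : Type*} [MeasurableSpace 𝕏]
    (ρ0 ρ1 : Measure 𝕏) [IsProbabilityMeasure ρ0] [IsProbabilityMeasure ρ1]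
    (hac : ρ0 ≪ ρ1)
    (Ψ : 𝕏 → ℕ) (hΨmeas : Measurable Ψ) (hΨ01 : ∀ x, Ψ x = 0 ∨ Ψ x = 1) :
    (1 / 2 : ℝ≥0∞) * EReal.exp (-(klDivE ρ0 ρ1)) ≤
      ρ0 {x | Ψ x = 1} + ρ1 {x | Ψ x = 0} := by
  classical
  set f : 𝕏 → ℝ≥0∞ := ρ0.rnDeriv ρ1 with hf
  have hfm : Measurable f := Measure.measurable_rnDeriv _ _
  set m : 𝕏 → ℝ≥0∞ := fun x => min (f x) 1 with hm
  have hmm : Measurable m := hfm.min measurable_const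
  set A : Set 𝕏 := {x | Ψ x = 1} with hA
  have hAmeas : MeasurableSet A := hΨmeas (measurableSet_singleton 1)
  have hAc : {x | Ψ x = 0} = Aᶜ := by
    ext x
    rcases hΨ01 x with h | h <;> simp [hA, h]
  -- Step 3: ∫⁻ m ∂ρ1 ≤ ρ0 A + ρ1 Aᶜ
  have h3 : ∫⁻ x, m x ∂ρ1 ≤ ρ0 A + ρ1 Aᶜ := by
    rw [← lintegral_add_compl (fun x => m x) hAmeas]
    refine add_le_add ?_ ?_
    · calc ∫⁻ x in A, m x ∂ρ1 ≤ ∫⁻ x in A, f x ∂ρ1 := by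
            exact lintegral_mono fun x => min_le_left _ _
        _ = ρ0 A := Measure.setLIntegral_rnDeriv hac A
    · calc ∫⁻ x in Aᶜ, m x ∂ρ1 ≤ ∫⁻ x in Aᶜ, 1 ∂ρ1 := by
            exact lintegral_mono fun x => min_le_right _ _
        _ = ρ1 Aᶜ := by simp
  have hm1 : ∫⁻ x, m x ∂ρ1 ≤ 1 := by
    calc ∫⁻ x, m x ∂ρ1 ≤ ∫⁻ _, 1 ∂ρ1 := lintegral_mono fun x => min_le_right _ _
      _ = 1 := by simp
  -- Step 2: Cauchy–Schwarz
  set H : ℝ≥0∞ := ∫⁻ x, f x ^ (1/2 : ℝ) ∂ρ1 with hH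
  have h2 : H * H ≤ 2 * ∫⁻ x, m x ∂ρ1 := by
    set M : 𝕏 → ℝ≥0∞ := fun x => max (f x) 1 with hM
    have hMm : Measurable M := hfm.max measurable_const
    have hconj : Real.HolderConjugate 2 2 := ⟨by norm_num, by norm_num, by norm_num⟩
    have hsplit : ∀ x, f x ^ (1/2 : ℝ) = (fun y => m y ^ (1/2 : ℝ)) x *
        (fun y => M y ^ (1/2 : ℝ)) x := by
      intro x
      simp only [hm, hM]
      rw [← ENNReal.mul_rpow_of_nonneg _ _ (by norm_num : (0:ℝ) ≤ 1/2), min_mul_max, mul_one]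
    have hCS : H ≤ (∫⁻ x, ((fun y => m y ^ (1/2 : ℝ)) x) ^ (2:ℝ) ∂ρ1) ^ (1/(2:ℝ)) *
        (∫⁻ x, ((fun y => M y ^ (1/2 : ℝ)) x) ^ (2:ℝ) ∂ρ1) ^ (1/(2:ℝ)) := by
      rw [hH]
      simp_rw [hsplit]
      exact ENNReal.lintegral_mul_le_Lp_mul_Lq ρ1 hconj
        (hmm.pow_const _).aemeasurable (hMm.pow_const _).aemeasurable
    have hpow : ∀ a : ℝ≥0∞, (a ^ (1/2 : ℝ)) ^ (2:ℝ) = a := by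
      intro a
      rw [← ENNReal.rpow_mul]
      norm_num
    simp_rw [hpow] at hCS
    have hMint : ∫⁻ x, M x ∂ρ1 ≤ 2 := by
      calc ∫⁻ x, M x ∂ρ1 ≤ ∫⁻ x, (f x + 1) ∂ρ1 := by
            refine lintegral_mono fun x => ?_
            simp only [hM]
            exact max_le (le_add_right le_rfl) (le_add_left le_rfl)
        _ = ρ0 Set.univ + 1 := by
            rw [lintegral_add_right _ measurable_const, Measure.lintegral_rnDeriv hac]
            simp
        _ = 2 := by simp; norm_num
    calc H * H ≤ ((∫⁻ x, m x ∂ρ1) ^ (1/(2:ℝ)) * (∫⁻ x, M x ∂ρ1) ^ (1/(2:ℝ))) *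
          ((∫⁻ x, m x ∂ρ1) ^ (1/(2:ℝ)) * (∫⁻ x, M x ∂ρ1) ^ (1/(2:ℝ))) :=
        mul_le_mul' hCS hCS
      _ = (∫⁻ x, m x ∂ρ1) * (∫⁻ x, M x ∂ρ1) := by
          rw [mul_mul_mul_comm, ← ENNReal.rpow_add_of_nonneg _ _ (by norm_num) (by norm_num),
            ← ENNReal.rpow_add_of_nonneg _ _ (by norm_num) (by norm_num)]
          norm_num
      _ ≤ (∫⁻ x, m x ∂ρ1) * 2 := mul_le_mul_right hMint _
      _ = 2 * ∫⁻ x, m x ∂ρ1 := mul_comm _ _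
  have hHne : H ≠ ⊤ := by
    intro h
    rw [h] at h2
    simp only [ENNReal.top_mul (by simp : (⊤:ℝ≥0∞) ≠ 0)] at h2
    have : (2 : ℝ≥0∞) * ∫⁻ x, m x ∂ρ1 ≤ 2 * 1 := mul_le_mul_right hm1 _
    rw [mul_one] at this
    exact absurd (le_trans h2 this) (by simp)
  -- Step 1: Jensen
  set g : 𝕏 → ℝ := fun x => Real.exp (-llr ρ0 ρ1 x / 2) with hg
  have hgm : Measurable g := (((measurable_llr ρ0 ρ1).neg).div_const 2).exp
  have hgnn : ∀ x, 0 ≤ g x := fun x => (Real.exp_pos _).le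
  -- a.e. identification of ofReal (g x) with f x ^ (-(1/2))
  have hae0 : ∀ᵐ x ∂ρ0, ENNReal.ofReal (g x) = f x ^ (-(1/2) : ℝ) := by
    filter_upwards [Measure.rnDeriv_pos hac, hac.ae_le (Measure.rnDeriv_lt_top ρ0 ρ1)]
      with x hpos hlt
    have htpos : 0 < (f x).toReal := ENNReal.toReal_pos hpos.ne' hlt.ne
    have : g x = (f x).toReal ^ (-(1/2) : ℝ) := by
      simp only [hg, llr]
      rw [Real.rpow_def_of_pos htpos]
      congr 1
      ring
    rw [this, ← ENNReal.ofReal_rpow_of_pos htpos, ENNReal.ofReal_toReal hlt.ne]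
  have hlint : ∫⁻ x, ENNReal.ofReal (g x) ∂ρ0 = H := by
    rw [lintegral_congr_ae hae0]
    rw [← lintegral_rnDeriv_mul hac (hfm.pow_const _).aemeasurable]
    refine lintegral_congr_ae ?_
    filter_upwards [Measure.rnDeriv_lt_top ρ0 ρ1] with x hlt
    rcases eq_or_ne (f x) 0 with h0 | h0
    · simp [← hf, h0, ENNReal.zero_rpow_of_pos, ENNReal.zero_rpow_of_neg]
    · rw [← hf]
      calc f x * f x ^ (-(1/2) : ℝ) = f x ^ (1:ℝ) * f x ^ (-(1/2) : ℝ) := by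
            rw [ENNReal.rpow_one]
        _ = f x ^ ((1:ℝ) + (-(1/2))) := (ENNReal.rpow_add _ _ h0 hlt.ne).symm
        _ = f x ^ (1/2 : ℝ) := by norm_num
  have hgint : Integrable g ρ0 := by
    refine ⟨hgm.aestronglyMeasurable, ?_⟩
    rw [hasFiniteIntegral_iff_norm]
    have : ∀ x, ENNReal.ofReal ‖g x‖ = ENNReal.ofReal (g x) := fun x => by
      rw [Real.norm_of_nonneg (hgnn x)]
    simp_rw [this, hlint]
    exact hHne.lt_top
  -- case split on integrability of llr
  by_cases hint : Integrable (llr ρ0 ρ1) ρ0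
  swap
  · rw [klDivE, if_neg hint]
    simp
  rw [klDivE, if_pos hint]
  set K : ℝ := ∫ x, llr ρ0 ρ1 x ∂ρ0 with hK
  have hcast : (-(K : EReal)) = ((-K : ℝ) : EReal) := by
    norm_cast
  rw [hcast, EReal.exp_coe]
  -- Jensen: exp (-K/2) ≤ ∫ g
  have hjensen : Real.exp (-K / 2) ≤ ∫ x, g x ∂ρ0 := by
    have hfint : Integrable (fun x => -llr ρ0 ρ1 x / 2) ρ0 := (hint.neg).div_const 2
    have := convexOn_exp.map_integral_le (Real.continuous_exp.continuousOn) isClosed_univ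
      (Filter.Eventually.of_forall fun x => Set.mem_univ _) hfint
      (by exact hgint)
    calc Real.exp (-K / 2) = Real.exp (∫ x, -llr ρ0 ρ1 x / 2 ∂ρ0) := by
          rw [integral_div, integral_neg]
      _ ≤ ∫ x, g x ∂ρ0 := this
  have h1 : ENNReal.ofReal (Real.exp (-K / 2)) ≤ H := by
    calc ENNReal.ofReal (Real.exp (-K / 2)) ≤ ENNReal.ofReal (∫ x, g x ∂ρ0) :=
          ENNReal.ofReal_le_ofReal hjensen
      _ = ∫⁻ x, ENNReal.ofReal (g x) ∂ρ0 :=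
          ofReal_integral_eq_lintegral_ofReal hgint
            (Filter.Eventually.of_forall hgnn)
      _ = H := hlint
  -- conclude
  have hexp : ENNReal.ofReal (Real.exp (-K)) =
      ENNReal.ofReal (Real.exp (-K / 2)) * ENNReal.ofReal (Real.exp (-K / 2)) := by
    rw [← ENNReal.ofReal_mul (Real.exp_pos _).le, ← Real.exp_add]
    norm_num
  calc (1 / 2 : ℝ≥0∞) * ENNReal.ofReal (Real.exp (-K))
      = (1 / 2 : ℝ≥0∞) * (ENNReal.ofReal (Real.exp (-K / 2)) *
        ENNReal.ofReal (Real.exp (-K / 2))) := by rw [hexp]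
    _ ≤ (1 / 2 : ℝ≥0∞) * (H * H) := by
        exact mul_le_mul_right (mul_le_mul' h1 h1) _
    _ ≤ (1 / 2 : ℝ≥0∞) * (2 * ∫⁻ x, m x ∂ρ1) := mul_le_mul_right h2 _
    _ = ∫⁻ x, m x ∂ρ1 := by
        rw [← mul_assoc, ENNReal.div_mul_cancel (by norm_num) (by norm_num), one_mul]
    _ ≤ ρ0 A + ρ1 Aᶜ := h3
    _ = ρ0 {x | Ψ x = 1} + ρ1 {x | Ψ x = 0} := by rw [hAc]
end

section
/- For every real κ > 0, E[exp(−κ ∑_{j=1}^{n} X_j)] ≤ exp(−(1/10) ∑_{j=1}^{n} p_j) + exp(−(κ/2) ∑_{j=1}^{n} p_j). -/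
open MeasureTheory ProbabilityTheory Finset

/-- Single Bernoulli factor: `∫ exp(-κ X) = (1-p) + p e^{-κ}`. -/
lemma bernoulli_mgf {Ω : Type*} [MeasurableSpace Ω] (μ : Measure Ω) [IsProbabilityMeasure μ]
    (Y : Ω → ℝ) (q : ℝ) (hq0 : 0 ≤ q) (hq1 : q ≤ 1) (hY : Measurable Y)
    (h1 : μ {ω | Y ω = 1} = ENNReal.ofReal q)
    (h0 : μ {ω | Y ω = 0} = ENNReal.ofReal (1 - q)) (κ : ℝ) :
    ∫ ω, Real.exp (-κ * Y ω) ∂μ = (1 - q) + q * Real.exp (-κ) := by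
  set A : Set Ω := {ω | Y ω = 1} with hA
  set B : Set Ω := {ω | Y ω = 0} with hB
  have hmA : MeasurableSet A := hY (measurableSet_singleton 1)
  have hmB : MeasurableSet B := hY (measurableSet_singleton 0)
  have hdisj : Disjoint A B := by
    rw [Set.disjoint_left]
    intro ω hωA hωB
    simp only [hA, hB, Set.mem_setOf_eq] at hωA hωB
    rw [hωA] at hωB; norm_num at hωB
  have hunion : μ (A ∪ B) = 1 := by
    rw [measure_union hdisj hmB, h1, h0, ← ENNReal.ofReal_add hq0 (by linarith)]
    norm_num
  have hae : ∀ᵐ ω ∂μ, ω ∈ A ∪ B := by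
    have hcompl : μ (A ∪ B)ᶜ = 0 := by
      rw [measure_compl (hmA.union hmB) (measure_ne_top _ _), hunion, measure_univ, tsub_self]
    exact ae_iff.mpr (by simpa [Set.compl_def] using hcompl)
  have hcongr : (fun ω => Real.exp (-κ * Y ω)) =ᵐ[μ]
      (fun ω => A.indicator (fun _ => Real.exp (-κ)) ω + B.indicator (fun _ => (1:ℝ)) ω) := by
    filter_upwards [hae] with ω hω
    rcases hω with hω | hω
    · have hωB : ω ∉ B := fun hb => hdisj.le_bot ⟨hω, hb⟩
      rw [Set.indicator_of_mem hω, Set.indicator_of_notMem hωB]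
      have hY1 : Y ω = 1 := hω
      rw [hY1, mul_one, add_zero]
    · have hωA : ω ∉ A := fun ha => hdisj.le_bot ⟨ha, hω⟩
      rw [Set.indicator_of_notMem hωA, Set.indicator_of_mem hω]
      have hY0 : Y ω = 0 := hω
      rw [hY0, mul_zero, Real.exp_zero, zero_add]
  rw [integral_congr_ae hcongr, integral_add
      ((integrable_const _).indicator hmA) ((integrable_const _).indicator hmB),
    integral_indicator_const _ hmA, integral_indicator_const _ hmB, measureReal_def, measureReal_def, h1, h0,
    ENNReal.toReal_ofReal hq0, ENNReal.toReal_ofReal (by linarith)]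
  simp [smul_eq_mul]; ring

/-- For independent Bernoulli variables `X_j` with parameters `p_j` and any `κ > 0`,
`E[exp(−κ ∑ X_j)] ≤ exp(−(1/10) ∑ p_j) + exp(−(κ/2) ∑ p_j)`. -/
theorem stmt4 {Ω : Type*} [MeasurableSpace Ω] (μ : Measure Ω) [IsProbabilityMeasure μ]
    (n : ℕ) (X : Fin n → Ω → ℝ) (p : Fin n → ℝ)
    (hp0 : ∀ j, 0 ≤ p j) (hp1 : ∀ j, p j ≤ 1)
    (hmeas : ∀ j, Measurable (X j))
    (hind : iIndepFun X μ)
    (hX1 : ∀ j, μ {ω | X j ω = 1} = ENNReal.ofReal (p j))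
    (hX0 : ∀ j, μ {ω | X j ω = 0} = ENNReal.ofReal (1 - p j))
    (κ : ℝ) (hκ : 0 < κ) :
    ∫ ω, Real.exp (-κ * ∑ j, X j ω) ∂μ ≤
      Real.exp (-(1 / 10) * ∑ j, p j) + Real.exp (-(κ / 2) * ∑ j, p j) := by
  set S := ∑ j, p j with hS
  have hS0 : 0 ≤ S := Finset.sum_nonneg fun j _ => hp0 j
  set c := 1 - Real.exp (-κ) with hc
  have hc0 : 0 < c := by
    have := Real.exp_lt_one_iff.mpr (neg_lt_zero.mpr hκ); linarith [this]
  have hc1 : c ≤ 1 := by have := Real.exp_pos (-κ); rw [hc]; linarith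
  -- Step 1: product formula via mgf
  have hlhs : ∫ ω, Real.exp (-κ * ∑ j, X j ω) ∂μ = ∏ j, ((1 - p j) + p j * Real.exp (-κ)) := by
    have h1 : (∫ ω, Real.exp (-κ * ∑ j, X j ω) ∂μ) = mgf (∑ j, X j) μ (-κ) := by
      simp only [mgf, Finset.sum_apply]
    rw [h1, hind.mgf_sum hmeas]
    exact Finset.prod_congr rfl fun j _ =>
      bernoulli_mgf μ (X j) (p j) (hp0 j) (hp1 j) (hmeas j) (hX1 j) (hX0 j) κ
  -- Step 2: each factor ≤ exp(-c p_j)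
  have hfac : ∀ j : Fin n, (1 - p j) + p j * Real.exp (-κ) ≤ Real.exp (-(c * p j)) := by
    intro j
    have : (1 - p j) + p j * Real.exp (-κ) = 1 + (-(c * p j)) := by rw [hc]; ring
    rw [this]
    linarith [Real.add_one_le_exp (-(c * p j))]
  have hfac0 : ∀ j : Fin n, 0 ≤ (1 - p j) + p j * Real.exp (-κ) := by
    intro j
    have := Real.exp_pos (-κ)
    nlinarith [hp0 j, hp1 j]
  have hprod : ∏ j, ((1 - p j) + p j * Real.exp (-κ)) ≤ Real.exp (-(c * S)) := by
    calc ∏ j, ((1 - p j) + p j * Real.exp (-κ))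
        ≤ ∏ j, Real.exp (-(c * p j)) :=
          Finset.prod_le_prod (fun j _ => hfac0 j) (fun j _ => hfac j)
      _ = Real.exp (∑ j, -(c * p j)) := (Real.exp_sum _ _).symm
      _ = Real.exp (-(c * S)) := by rw [hS, Finset.mul_sum, ← Finset.sum_neg_distrib]
  -- Step 3: exp(-cS) ≤ RHS, case split on κ ≤ 1
  have hexpinv : Real.exp (-κ) ≤ 1 / (1 + κ) := by
    rw [Real.exp_neg, one_div]
    exact inv_anti₀ (by linarith) (by linarith [Real.add_one_le_exp κ])
  have hfinal : Real.exp (-(c * S)) ≤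
      Real.exp (-(1 / 10) * S) + Real.exp (-(κ / 2) * S) := by
    rcases le_or_gt κ 1 with hκ1 | hκ1
    · -- c ≥ κ/2
      have hcge : κ / 2 ≤ c := by
        rw [hc]
        have h1 : (0:ℝ) < 1 + κ := by linarith
        have he : Real.exp (-κ) * (1 + κ) ≤ 1 := by
          have := (le_div_iff₀ h1).mp hexpinv
          linarith
        nlinarith [he, mul_nonneg hκ.le (by linarith : (0:ℝ) ≤ 1 - κ)]
      have : Real.exp (-(c * S)) ≤ Real.exp (-(κ / 2) * S) := by
        apply Real.exp_le_exp.mpr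
        nlinarith
      linarith [Real.exp_pos (-(1 / 10) * S), this]
    · -- c ≥ 1/2 ≥ 1/10
      have hcge : (1:ℝ) / 10 ≤ c := by
        rw [hc]
        have h2 : Real.exp (-κ) ≤ Real.exp (-1) := Real.exp_le_exp.mpr (by linarith)
        have h3 : Real.exp (-1:ℝ) ≤ 1 / 2 := by
          rw [Real.exp_neg, one_div]
          exact inv_anti₀ two_pos (by linarith [Real.add_one_le_exp (1:ℝ)])
        linarith
      have : Real.exp (-(c * S)) ≤ Real.exp (-(1 / 10) * S) := by
        apply Real.exp_le_exp.mpr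
        nlinarith
      linarith [Real.exp_pos (-(κ / 2) * S), this]
  calc ∫ ω, Real.exp (-κ * ∑ j, X j ω) ∂μ
      = ∏ j, ((1 - p j) + p j * Real.exp (-κ)) := hlhs
    _ ≤ Real.exp (-(c * S)) := hprod
    _ ≤ _ := hfinal
end

section
/- One has ∑_{n=1}^{N} x_n · 1{f_n ≤ g_n} ≤ max{0, (max_{1 ≤ n ≤ N} g_n) + M}, where 1{·} denotes the indicator function. -/
open Finset

/-- `∑_{n=1}^{N} x_n · 1{f_n ≤ g_n} ≤ max{0, (max_{1 ≤ n ≤ N} g_n) + M}`,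
where `f_n = ∑_{j=1}^{n-1} x_j` and `0 ≤ x_j ≤ M`. -/
theorem stmt7 (N : ℕ) (hN : 1 ≤ N) (M : ℝ) (hM : 0 ≤ M) (x g : ℕ → ℝ)
    (hx0 : ∀ j, 1 ≤ j → j ≤ N → 0 ≤ x j) (hxM : ∀ j, 1 ≤ j → j ≤ N → x j ≤ M)
    (f : ℕ → ℝ) (hf : ∀ n, 1 ≤ n → n ≤ N → f n = ∑ j ∈ Finset.Icc 1 (n - 1), x j) :
    ∑ n ∈ Finset.Icc 1 N, (if f n ≤ g n then x n else 0) ≤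
      max 0 ((Finset.Icc 1 N).sup' (Finset.nonempty_Icc.mpr hN) g + M) := by
  set S := (Finset.Icc 1 N).filter (fun n => f n ≤ g n) with hS
  by_cases hSne : S.Nonempty
  · set n₀ := S.max' hSne with hn₀
    have hmem : n₀ ∈ S := S.max'_mem hSne
    have hIcc : n₀ ∈ Finset.Icc 1 N := (Finset.mem_filter.mp hmem).1
    have hfg : f n₀ ≤ g n₀ := (Finset.mem_filter.mp hmem).2
    have h1 : 1 ≤ n₀ := (Finset.mem_Icc.mp hIcc).1
    have h2 : n₀ ≤ N := (Finset.mem_Icc.mp hIcc).2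
    have hzero : ∀ n ∈ Finset.Icc 1 N, n₀ < n → (if f n ≤ g n then x n else 0) = 0 := by
      intro n hn hlt
      rw [if_neg]
      intro hle
      exact absurd (S.le_max' n (Finset.mem_filter.mpr ⟨hn, hle⟩)) (not_le.mpr hlt)
    have hsplit : ∑ n ∈ Finset.Icc 1 N, (if f n ≤ g n then x n else 0)
        = ∑ n ∈ Finset.Icc 1 n₀, (if f n ≤ g n then x n else 0) := by
      have hIoc : ∀ m : ℕ, Finset.Icc 1 m = Finset.Ioc 0 m := fun m => by
        ext a; simp [Nat.succ_le_iff]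
      rw [hIoc, ← Finset.sum_Ioc_consecutive _ (Nat.zero_le n₀) h2, ← hIoc]
      have : ∑ n ∈ Finset.Ioc n₀ N, (if f n ≤ g n then x n else 0) = 0 := by
        apply Finset.sum_eq_zero
        intro n hn
        have hn' := Finset.mem_Ioc.mp hn
        exact hzero n (Finset.mem_Icc.mpr ⟨le_trans h1 (le_of_lt hn'.1), hn'.2⟩) hn'.1
      rw [this, add_zero]
    have hle1 : ∑ n ∈ Finset.Icc 1 n₀, (if f n ≤ g n then x n else 0)
        ≤ ∑ n ∈ Finset.Icc 1 n₀, x n := by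
      apply Finset.sum_le_sum
      intro n hn
      have hn' := Finset.mem_Icc.mp hn
      split
      · exact le_refl _
      · exact hx0 n hn'.1 (le_trans hn'.2 h2)
    have hsum : ∑ n ∈ Finset.Icc 1 n₀, x n = f n₀ + x n₀ := by
      have : n₀ = (n₀ - 1) + 1 := (Nat.succ_pred_eq_of_pos h1).symm
      rw [hf n₀ h1 h2]
      calc ∑ n ∈ Finset.Icc 1 n₀, x n
          = ∑ n ∈ Finset.Icc 1 ((n₀ - 1) + 1), x n := by rw [← this]
        _ = ∑ n ∈ Finset.Icc 1 (n₀ - 1), x n + x ((n₀ - 1) + 1) :=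
            Finset.sum_Icc_succ_top (Nat.le_add_left 1 _) x
        _ = ∑ n ∈ Finset.Icc 1 (n₀ - 1), x n + x n₀ := by rw [← this]
    have hgsup : g n₀ ≤ (Finset.Icc 1 N).sup' (Finset.nonempty_Icc.mpr hN) g :=
      Finset.le_sup' g hIcc
    calc ∑ n ∈ Finset.Icc 1 N, (if f n ≤ g n then x n else 0)
        = ∑ n ∈ Finset.Icc 1 n₀, (if f n ≤ g n then x n else 0) := hsplit
      _ ≤ ∑ n ∈ Finset.Icc 1 n₀, x n := hle1
      _ = f n₀ + x n₀ := hsum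
      _ ≤ g n₀ + M := add_le_add hfg (hxM n₀ h1 h2)
      _ ≤ (Finset.Icc 1 N).sup' (Finset.nonempty_Icc.mpr hN) g + M := by linarith
      _ ≤ max 0 _ := le_max_right _ _
  · have : ∑ n ∈ Finset.Icc 1 N, (if f n ≤ g n then x n else 0) = 0 := by
      apply Finset.sum_eq_zero
      intro n hn
      rw [if_neg]
      intro hle
      exact hSne ⟨n, Finset.mem_filter.mpr ⟨hn, hle⟩⟩
    rw [this]
    exact le_max_left _ _
end

section
/- Let h_1, …, h_T be i.i.d. Bernoulli(λ) random variables with λ ∈ (0,1], and let a > 0. Then E[∑_{t=1}^{T} exp(−a ∑_{s=1}^{t} h_s)] ≤ (10/λ)(1 − e^{−λT/10}) + (2/(aλ))(1 − e^{−aλT/2}). -/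
open MeasureTheory ProbabilityTheory Finset

/-- Product over `attachFin` of a function depending only on the value. -/
lemma prod_attachFin_val {M : Type*} [CommMonoid M] {n : ℕ} (s : Finset ℕ)
    (hs : ∀ m ∈ s, m < n) (g : ℕ → M) :
    ∏ j ∈ s.attachFin hs, g (j : ℕ) = ∏ i ∈ s, g i := by
  refine Finset.prod_bij (fun (j : Fin n) _ => (j : ℕ)) ?_ ?_ ?_ ?_
  · intro a ha; exact (Finset.mem_attachFin hs).1 ha
  · intro a _ b _ hab; exact Fin.val_injective hab
  · intro b hb; exact ⟨⟨b, hs b hb⟩, (Finset.mem_attachFin hs).2 hb, rfl⟩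
  · intro a _; rfl

/-- Sum over `Icc 1 t` equals sum over `range t` shifted. -/
lemma sum_Icc_one_eq_sum_range {M : Type*} [AddCommMonoid M] (f : ℕ → M) (t : ℕ) :
    ∑ s ∈ Finset.Icc 1 t, f s = ∑ i ∈ Finset.range t, f (i + 1) := by
  induction t with
  | zero => simp
  | succ n ih =>
    rw [Finset.sum_Icc_succ_top (by omega : 1 ≤ n + 1), ih, Finset.sum_range_succ]

/-- Integral of a finite product of independent integrable random variables. -/
lemma integral_indep_prod {Ω : Type*} [MeasurableSpace Ω] (μ : Measure Ω)
    [IsProbabilityMeasure μ] {ι : Type*} {X : ι → Ω → ℝ}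
    (hind : iIndepFun X μ)
    (hm : ∀ i, Measurable (X i)) (hint : ∀ i, Integrable (X i) μ) (s : Finset ι) :
    Integrable (∏ i ∈ s, X i) μ ∧ ∫ ω, (∏ i ∈ s, X i) ω ∂μ = ∏ i ∈ s, ∫ ω, X i ω ∂μ := by
  classical
  induction s using Finset.induction_on with
  | empty =>
    simp only [Finset.prod_empty]
    exact ⟨integrable_const 1, by simp⟩
  | @insert j s' hj ih =>
    obtain ⟨ihint, iheq⟩ := ih
    have hdep : IndepFun (∏ i ∈ s', X i) (X j) μ :=
      hind.indepFun_finsetProd_of_notMem hm hj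
    have hprod : (∏ i ∈ insert j s', X i) = X j * ∏ i ∈ s', X i := by
      rw [Finset.prod_insert hj]
    have hint2 : Integrable (X j * ∏ i ∈ s', X i) μ := by
      have := hdep.symm.integrable_mul (hint j) ihint
      exact this
    constructor
    · rw [hprod]; exact hint2
    · rw [hprod]
      have := hdep.integral_mul_eq_mul_integral ihint.aestronglyMeasurable (hint j).aestronglyMeasurable
      have heq : ∫ ω, (X j * ∏ i ∈ s', X i) ω ∂μ
          = (∫ ω, X j ω ∂μ) * ∫ ω, (∏ i ∈ s', X i) ω ∂μ := by
        have h1 : (fun ω => (X j * ∏ i ∈ s', X i) ω)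
            = fun ω => ((∏ i ∈ s', X i) * X j) ω := by
          funext ω; simp [mul_comm]
        rw [h1]
        exact this.trans (mul_comm _ _)
      rw [heq, iheq, Finset.prod_insert hj]

/-- Geometric tail bound: `∑_{t=1}^T e^{-ct} ≤ (1/c)(1 - e^{-cT})`. -/
lemma geom_sum_exp_le (c : ℝ) (hc : 0 < c) (T : ℕ) :
    ∑ t ∈ Finset.Icc 1 T, (Real.exp (-c)) ^ t ≤ (1 / c) * (1 - Real.exp (-(c * T))) := by
  set r := Real.exp (-c) with hr
  have hr0 : 0 < r := Real.exp_pos _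
  have hr1 : r < 1 := by
    rw [hr]; exact Real.exp_lt_one_iff.2 (by linarith)
  have hrT : r ^ T = Real.exp (-(c * T)) := by
    rw [hr, ← Real.exp_nat_mul]; ring_nf
  have hsum : ∑ t ∈ Finset.Icc 1 T, r ^ t = r * ∑ i ∈ Finset.range T, r ^ i := by
    rw [sum_Icc_one_eq_sum_range (fun t => r ^ t) T, Finset.mul_sum]
    exact Finset.sum_congr rfl fun i _ => by ring
  have hgeom : ∑ i ∈ Finset.range T, r ^ i = (1 - r ^ T) / (1 - r) := by
    rw [geom_sum_eq (ne_of_lt hr1)]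
    rw [div_eq_div_iff (by linarith) (by linarith)]
    ring
  have hrTle : r ^ T ≤ 1 := pow_le_one₀ (le_of_lt hr0) (le_of_lt hr1)
  have hkey : r / (1 - r) ≤ 1 / c := by
    rw [div_le_div_iff₀ (by linarith) hc]
    have := Real.add_one_le_exp c
    have hrc : r * Real.exp c = 1 := by
      rw [hr, ← Real.exp_add]; simp
    nlinarith [Real.exp_pos c]
  calc ∑ t ∈ Finset.Icc 1 T, r ^ t = (r / (1 - r)) * (1 - r ^ T) := by
        rw [hsum, hgeom]; field_simp
    _ ≤ (1 / c) * (1 - r ^ T) := by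
        apply mul_le_mul_of_nonneg_right hkey; linarith
    _ = (1 / c) * (1 - Real.exp (-(c * T))) := by rw [hrT]

/-- Analytic bound on the geometric sum. -/
lemma analytic_bound (T : ℕ) (lam : ℝ) (hlam0 : 0 < lam) (hlam1 : lam ≤ 1)
    (a : ℝ) (ha : 0 < a) :
    ∑ t ∈ Finset.Icc 1 T, (lam * Real.exp (-a) + (1 - lam)) ^ t ≤
      (10 / lam) * (1 - Real.exp (-(lam * T / 10))) +
        (2 / (a * lam)) * (1 - Real.exp (-(a * lam * T / 2))) := by
  set q := lam * Real.exp (-a) + (1 - lam) with hq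
  have hq0 : 0 ≤ q := by
    have := Real.exp_pos (-a); nlinarith
  have hqform : q = 1 - lam * (1 - Real.exp (-a)) := by ring
  have haea : a * Real.exp (-a) ≤ 1 - Real.exp (-a) := by
    have h1 := Real.add_one_le_exp a
    have h2 : Real.exp (-a) * Real.exp a = 1 := by rw [← Real.exp_add]; simp
    nlinarith [Real.exp_pos (-a), Real.exp_pos a]
  -- general step: if q ≤ exp(-c') and c' > 0 then sum ≤ (1/c')(1-exp(-c'T))
  have main : ∀ c' : ℝ, 0 < c' → q ≤ Real.exp (-c') →
      ∑ t ∈ Finset.Icc 1 T, q ^ t ≤ (1 / c') * (1 - Real.exp (-(c' * T))) := by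
    intro c' hc' hqc
    calc ∑ t ∈ Finset.Icc 1 T, q ^ t ≤ ∑ t ∈ Finset.Icc 1 T, (Real.exp (-c')) ^ t := by
          apply Finset.sum_le_sum
          intro t _
          exact pow_le_pow_left₀ hq0 hqc t
      _ ≤ (1 / c') * (1 - Real.exp (-(c' * T))) := geom_sum_exp_le c' hc' T
  have hexp15 : Real.exp (1 / 5 : ℝ) < 2 := by
    have h5 : (Real.exp (1 / 5 : ℝ)) ^ 5 = Real.exp 1 := by
      rw [← Real.exp_nat_mul]; norm_num
    have he : Real.exp 1 < 2.7182818286 := Real.exp_one_lt_d9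
    have : (Real.exp (1 / 5 : ℝ)) ^ 5 < 2 ^ 5 := by
      rw [h5]; norm_num; linarith
    exact lt_of_pow_lt_pow_left₀ 5 (by norm_num) this
  by_cases hcase : (1 / 5 : ℝ) ≤ a
  · -- a ≥ 1/5 : use c' = lam/10
    have hea : Real.exp (-a) ≤ 9 / 10 := by
      have h1 : Real.exp (-a) ≤ Real.exp (-(1 / 5 : ℝ)) :=
        Real.exp_le_exp.2 (by linarith)
      have h2 : Real.exp (-(1 / 5 : ℝ)) = 1 / Real.exp (1 / 5 : ℝ) := by
        rw [Real.exp_neg]; rw [inv_eq_one_div]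
      have h3 : (1.2 : ℝ) ≤ Real.exp (1 / 5 : ℝ) := by
        have := Real.add_one_le_exp (1 / 5 : ℝ); linarith
      have h4 : 1 / Real.exp (1 / 5 : ℝ) ≤ 9 / 10 := by
        rw [div_le_div_iff₀ (Real.exp_pos _) (by norm_num)]; linarith
      linarith [h1, h2 ▸ h1]
    have hqle : q ≤ Real.exp (-(lam / 10)) := by
      have h1 : lam / 10 ≤ lam * (1 - Real.exp (-a)) := by nlinarith
      have h2 : q ≤ 1 - lam / 10 := by rw [hqform]; linarith
      have h3 := Real.one_sub_le_exp_neg (lam / 10)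
      linarith
    have hb := main (lam / 10) (by linarith) hqle
    have heq1 : (1 / (lam / 10)) * (1 - Real.exp (-(lam / 10 * T)))
        = (10 / lam) * (1 - Real.exp (-(lam * T / 10))) := by
      rw [one_div_div]
      congr 2
      ring_nf
    have hpos2 : 0 ≤ (2 / (a * lam)) * (1 - Real.exp (-(a * lam * T / 2))) := by
      apply mul_nonneg
      · positivity
      · have : Real.exp (-(a * lam * T / 2)) ≤ 1 :=
          Real.exp_le_one_iff.2 (neg_nonpos.mpr (by positivity))
        linarith
    calc ∑ t ∈ Finset.Icc 1 T, q ^ t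
        ≤ (1 / (lam / 10)) * (1 - Real.exp (-(lam / 10 * T))) := hb
      _ = (10 / lam) * (1 - Real.exp (-(lam * T / 10))) := heq1
      _ ≤ _ := by linarith
  · -- a < 1/5 : use c' = a * lam / 2
    push_neg at hcase
    have hea : (1 / 2 : ℝ) ≤ Real.exp (-a) := by
      have h1 : Real.exp (-(1 / 5 : ℝ)) ≤ Real.exp (-a) :=
        Real.exp_le_exp.2 (by linarith)
      have h2 : Real.exp (-(1 / 5 : ℝ)) = 1 / Real.exp (1 / 5 : ℝ) := by
        rw [Real.exp_neg, inv_eq_one_div]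
      have h4 : (1 / 2 : ℝ) ≤ 1 / Real.exp (1 / 5 : ℝ) := by
        rw [div_le_div_iff₀ (by norm_num) (Real.exp_pos _)]; linarith
      linarith [h2 ▸ h1]
    have hqle : q ≤ Real.exp (-(a * lam / 2)) := by
      have h0 : a / 2 ≤ a * Real.exp (-a) := by nlinarith
      have h1 : a * lam / 2 ≤ lam * (1 - Real.exp (-a)) := by nlinarith
      have h2 : q ≤ 1 - a * lam / 2 := by rw [hqform]; linarith
      have h3 := Real.one_sub_le_exp_neg (a * lam / 2)
      linarith
    have hb := main (a * lam / 2) (by positivity) hqle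
    have heq1 : (1 / (a * lam / 2)) * (1 - Real.exp (-(a * lam / 2 * T)))
        = (2 / (a * lam)) * (1 - Real.exp (-(a * lam * T / 2))) := by
      rw [one_div_div]
      congr 2
      ring_nf
    have hpos2 : 0 ≤ (10 / lam) * (1 - Real.exp (-(lam * T / 10))) := by
      apply mul_nonneg
      · positivity
      · have : Real.exp (-(lam * T / 10)) ≤ 1 :=
          Real.exp_le_one_iff.2 (neg_nonpos.mpr (by positivity))
        linarith
    calc ∑ t ∈ Finset.Icc 1 T, q ^ t
        ≤ (1 / (a * lam / 2)) * (1 - Real.exp (-(a * lam / 2 * T))) := hb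
      _ = (2 / (a * lam)) * (1 - Real.exp (-(a * lam * T / 2))) := heq1
      _ ≤ _ := by linarith

/-- For i.i.d. Bernoulli(λ) variables `h_1, …, h_T` with `λ ∈ (0,1]` and `a > 0`,
`E[∑_{t=1}^{T} exp(−a ∑_{s=1}^{t} h_s)] ≤ (10/λ)(1 − e^{−λT/10}) + (2/(aλ))(1 − e^{−aλT/2})`. -/
theorem stmt10 {Ω : Type*} [MeasurableSpace Ω] (μ : Measure Ω) [IsProbabilityMeasure μ]
    (T : ℕ) (hT : 1 ≤ T) (lam : ℝ) (hlam0 : 0 < lam) (hlam1 : lam ≤ 1)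
    (a : ℝ) (ha : 0 < a) (h : ℕ → Ω → ℝ)
    (hmeas : ∀ s, 1 ≤ s → s ≤ T → Measurable (h s))
    (hind : iIndepFun (fun (i : Fin T) ω => h ((i : ℕ) + 1) ω) μ)
    (hber1 : ∀ s, 1 ≤ s → s ≤ T → μ {ω | h s ω = 1} = ENNReal.ofReal lam)
    (hber0 : ∀ s, 1 ≤ s → s ≤ T → μ {ω | h s ω = 0} = ENNReal.ofReal (1 - lam)) :
    ∫ ω, ∑ t ∈ Finset.Icc 1 T, Real.exp (-(a * ∑ s ∈ Finset.Icc 1 t, h s ω)) ∂μ ≤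
      (10 / lam) * (1 - Real.exp (-(lam * T / 10))) +
        (2 / (a * lam)) * (1 - Real.exp (-(a * lam * T / 2))) := by
  classical
  set q : ℝ := lam * Real.exp (-a) + (1 - lam) with hqdef
  -- the family of transformed variables indexed by Fin T
  set X : Fin T → Ω → ℝ := fun j ω => Real.exp (-(a * h ((j : ℕ) + 1) ω)) with hX
  have hXmeas : ∀ j : Fin T, Measurable (X j) := by
    intro j
    have hj1 : 1 ≤ (j : ℕ) + 1 := Nat.le_add_left 1 _
    have hj2 : (j : ℕ) + 1 ≤ T := j.2
    exact Real.measurable_exp.comp ((measurable_const.mul (hmeas _ hj1 hj2)).neg)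
  have hXind : iIndepFun X μ := by
    have := hind.comp (fun _ : Fin T => fun x : ℝ => Real.exp (-(a * x)))
      (fun _ => Real.measurable_exp.comp ((measurable_const.mul measurable_id).neg))
    exact this
  -- a.e. each h s is Bernoulli valued, and the integral of X j is q
  have hXkey : ∀ j : Fin T, Integrable (X j) μ ∧ ∫ ω, X j ω ∂μ = q := by
    intro j
    set s := (j : ℕ) + 1 with hs
    have hj1 : 1 ≤ s := Nat.le_add_left 1 _
    have hj2 : s ≤ T := j.2
    have hm := hmeas s hj1 hj2
    set A : Set Ω := {ω | h s ω = 1} with hA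
    set B : Set Ω := {ω | h s ω = 0} with hB
    have hAm : MeasurableSet A := hm (measurableSet_singleton 1)
    have hBm : MeasurableSet B := hm (measurableSet_singleton 0)
    have hdisj : Disjoint A B := by
      rw [Set.disjoint_left]
      intro ω h1 h0
      simp only [hA, hB, Set.mem_setOf_eq] at h1 h0
      rw [h1] at h0; norm_num at h0
    have hmeasAB : μ (A ∪ B) = 1 := by
      rw [measure_union hdisj hBm, hber1 s hj1 hj2, hber0 s hj1 hj2,
        ← ENNReal.ofReal_add (by linarith) (by linarith)]
      norm_num
    have hae : ∀ᵐ ω ∂μ, ω ∈ A ∪ B := by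
      rw [MeasureTheory.ae_iff]
      have : {ω | ¬ ω ∈ A ∪ B} = (A ∪ B)ᶜ := rfl
      rw [this, measure_compl (hAm.union hBm) (measure_ne_top μ _), hmeasAB]
      simp
    -- the simple function
    set f : Ω → ℝ := fun ω => A.indicator (fun _ => Real.exp (-a) - 1) ω + 1 with hf
    have haef : f =ᵐ[μ] X j := by
      filter_upwards [hae] with ω hω
      rcases hω with hω | hω
      · simp only [hf, Set.indicator_of_mem hω]
        simp only [hA, Set.mem_setOf_eq] at hω
        simp only [hX, ← hs, hω, mul_one]
        ring
      · have hωA : ω ∉ A := by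
          simp only [hB, Set.mem_setOf_eq] at hω
          simp only [hA, Set.mem_setOf_eq, hω]
          norm_num
        simp only [hf, Set.indicator_of_notMem hωA]
        simp only [hB, Set.mem_setOf_eq] at hω
        simp only [hX, ← hs, hω, mul_zero, neg_zero, Real.exp_zero]
        ring
    have hfint : Integrable f μ := by
      apply Integrable.add _ (integrable_const 1)
      exact (integrable_const _).indicator hAm
    have hfval : ∫ ω, f ω ∂μ = q := by
      rw [hf]
      rw [integral_add ((integrable_const _).indicator hAm) (integrable_const 1)]
      rw [integral_indicator_const _ hAm, integral_const]
      simp only [smul_eq_mul, measureReal_def, measure_univ, ENNReal.toReal_one, one_mul]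
      rw [hber1 s hj1 hj2, ENNReal.toReal_ofReal (le_of_lt hlam0)]
      rw [hqdef]; ring
    constructor
    · exact hfint.congr haef
    · rw [← integral_congr_ae haef, hfval]
  -- pointwise product representation
  have hrepr : ∀ t, ∀ _ht1 : 1 ≤ t, ∀ ht2 : t ≤ T, ∀ ω,
      Real.exp (-(a * ∑ s ∈ Finset.Icc 1 t, h s ω))
        = ∏ j ∈ (Finset.range t).attachFin
            (fun m hm => lt_of_lt_of_le (Finset.mem_range.1 hm) ht2),
            X j ω := by
    intro t ht1 ht2 ω
    have h1 : ∑ s ∈ Finset.Icc 1 t, h s ω = ∑ i ∈ Finset.range t, h (i + 1) ω :=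
      sum_Icc_one_eq_sum_range (fun s => h s ω) t
    rw [h1]
    have h2 : -(a * ∑ i ∈ Finset.range t, h (i + 1) ω)
        = ∑ i ∈ Finset.range t, -(a * h (i + 1) ω) := by
      rw [Finset.mul_sum, ← Finset.sum_neg_distrib]
    rw [h2, Real.exp_sum]
    exact (prod_attachFin_val (Finset.range t) _
      (fun i => Real.exp (-(a * h (i + 1) ω)))).symm
  -- each summand's integral
  have hterm : ∀ t ∈ Finset.Icc 1 T,
      Integrable (fun ω => Real.exp (-(a * ∑ s ∈ Finset.Icc 1 t, h s ω))) μ ∧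
      ∫ ω, Real.exp (-(a * ∑ s ∈ Finset.Icc 1 t, h s ω)) ∂μ = q ^ t := by
    intro t htmem
    rw [Finset.mem_Icc] at htmem
    obtain ⟨ht1, ht2⟩ := htmem
    set St : Finset (Fin T) := (Finset.range t).attachFin
      (fun m hm => lt_of_lt_of_le (Finset.mem_range.1 hm) ht2) with hSt
    have hcard : St.card = t := by
      rw [hSt, Finset.card_attachFin, Finset.card_range]
    obtain ⟨hPint, hPval⟩ := integral_indep_prod μ hXind hXmeas
      (fun j => (hXkey j).1) St
    have hfun : (fun ω => Real.exp (-(a * ∑ s ∈ Finset.Icc 1 t, h s ω)))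
        = fun ω => (∏ j ∈ St, X j) ω := by
      funext ω
      rw [hrepr t ht1 ht2 ω, Finset.prod_apply]
    constructor
    · rw [hfun]; exact hPint
    · rw [hfun, hPval]
      have : ∀ j ∈ St, ∫ ω, X j ω ∂μ = q := fun j _ => (hXkey j).2
      rw [Finset.prod_congr rfl this, Finset.prod_const, hcard]
  -- swap integral and sum
  have hswap : ∫ ω, ∑ t ∈ Finset.Icc 1 T, Real.exp (-(a * ∑ s ∈ Finset.Icc 1 t, h s ω)) ∂μ
      = ∑ t ∈ Finset.Icc 1 T, ∫ ω, Real.exp (-(a * ∑ s ∈ Finset.Icc 1 t, h s ω)) ∂μ :=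
    integral_finset_sum _ (fun t ht => (hterm t ht).1)
  rw [hswap]
  have hsumval : ∑ t ∈ Finset.Icc 1 T, ∫ ω, Real.exp (-(a * ∑ s ∈ Finset.Icc 1 t, h s ω)) ∂μ
      = ∑ t ∈ Finset.Icc 1 T, q ^ t :=
    Finset.sum_congr rfl (fun t ht => (hterm t ht).2)
  rw [hsumval]
  exact analytic_bound T lam hlam0 hlam1 a ha
end

section
/- Define τ_t := ∑_{s=1}^{t} exp(a ∑_{τ=s}^{t} h_τ) for 1 ≤ t ≤ T. Then ∑_{t=1}^{T} 1/τ_t ≤ log(2 ∑_{t=0}^{T} exp(−a ∑_{s=1}^{t} h_s)), where the t = 0 summand on the right-hand side equals 1. -/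
open Finset



-- exp(1/t) ≤ (2t+1)/(2t-1)
lemma aux_exp_le (t : ℕ) (ht : 1 ≤ t) :
    Real.exp (1 / (t : ℝ)) ≤ (2 * t + 1) / (2 * t - 1) := by
  have ht' : (1 : ℝ) ≤ t := by exact_mod_cast ht
  have htpos : (0 : ℝ) < t := by linarith
  have hu0 : 0 ≤ 1 / (t : ℝ) := by positivity
  have hu1 : 1 / (t : ℝ) ≤ 1 := by
    rw [div_le_one htpos]; exact ht'
  have hb := Real.exp_bound' hu0 hu1 (n := 3) (by norm_num)
  refine hb.trans ?_
  simp only [Finset.sum_range_succ, Finset.sum_range_zero, Nat.factorial]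
  push_cast
  have h2t : (0:ℝ) < 2*t-1 := by linarith
  rw [le_div_iff₀ h2t]
  have h3 : (0:ℝ) < t^3 := by positivity
  field_simp
  nlinarith [htpos, pow_pos htpos 3, pow_pos htpos 4]

lemma aux_oneDiv (t : ℕ) (ht : 1 ≤ t) :
    1 / (t : ℝ) ≤ Real.log (2 * t + 1) - Real.log (2 * t - 1) := by
  have ht' : (1 : ℝ) ≤ t := by exact_mod_cast ht
  have h1 : (0:ℝ) < 2 * t - 1 := by linarith
  have h2 : (0:ℝ) < 2 * t + 1 := by linarith
  rw [← Real.log_div (by positivity) (by positivity)]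
  rw [Real.le_log_iff_exp_le (by positivity)]
  exact aux_exp_le t ht

-- monotonicity of x ↦ x - log(1+x)
lemma aux_slack_mono {p q : ℝ} (hp : 0 ≤ p) (hpq : p ≤ q) :
    Real.log (1 + q) - Real.log (1 + p) ≤ q - p := by
  have h1 : (0:ℝ) < 1 + p := by linarith
  have h2 : (0:ℝ) < 1 + q := by linarith
  rw [← Real.log_div (by positivity) (by positivity)]
  have := Real.log_le_sub_one_of_pos (x := (1+q)/(1+p)) (by positivity)
  have h5 : (1+q)/(1+p) - 1 ≤ q - p := by
    rw [div_sub_one (ne_of_gt h1), div_le_iff₀ h1]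
    nlinarith
  linarith

-- key per-term inequality
lemma aux_key (t : ℕ) (ht : 1 ≤ t) (x y : ℝ) (hx : 0 < x) (hy : 0 < y)
    (hxy : (t : ℝ) * x ≤ y) :
    x / y ≤ (Real.log (y + x) - Real.log y) +
      ((Real.log (2 * t + 1) - Real.log (2 * t - 1)) -
        (Real.log (t + 1) - Real.log t)) := by
  have ht' : (1 : ℝ) ≤ t := by exact_mod_cast ht
  have htpos : (0 : ℝ) < t := by linarith
  have hr : x / y ≤ 1 / t := by
    rw [div_le_div_iff₀ hy htpos]; linarith
  have hrpos : 0 < x / y := by positivity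
  have h1 : Real.log (y + x) - Real.log y = Real.log (1 + x / y) := by
    rw [← Real.log_div (by positivity) (by positivity), add_div, div_self (ne_of_gt hy)]
  have h2 : Real.log (t + 1) - Real.log t = Real.log (1 + 1 / (t:ℝ)) := by
    rw [← Real.log_div (by positivity) (by positivity), add_div, div_self (ne_of_gt htpos)]
  have h3 := aux_slack_mono (le_of_lt hrpos) hr
  have h4 := aux_oneDiv t ht
  rw [h1, h2]; linarith

lemma aux_main (T : ℕ) (E : ℕ → ℝ) (hEpos : ∀ t, 0 < E t) (hE0 : E 0 = 1)
    (hEanti : ∀ s t, s ≤ t → E t ≤ E s) (f : ℕ → ℝ)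
    (hf : ∀ t, 1 ≤ t → t ≤ T → f t = E t / ∑ k ∈ Finset.range t, E k) :
    ∑ t ∈ Finset.Icc 1 T, f t ≤ Real.log (2 * ∑ k ∈ Finset.range (T + 1), E k) := by
  set S : ℕ → ℝ := fun n => ∑ k ∈ Finset.range (n + 1), E k with hSdef
  have hSpos : ∀ n, 0 < S n := fun n =>
    Finset.sum_pos (fun k _ => hEpos k) ⟨0, by simp⟩
  have hSsucc : ∀ n, S (n + 1) = S n + E (n + 1) := fun n => Finset.sum_range_succ E (n + 1)
  have hS0 : S 0 = 1 := by simp [hSdef, hE0]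
  have key : ∀ t ∈ Finset.Icc 1 T, f t ≤
      (Real.log (S t) - Real.log (S (t - 1))) +
        ((Real.log (2 * t + 1) - Real.log (2 * t - 1)) -
          (Real.log (t + 1) - Real.log t)) := by
    intro t htmem
    obtain ⟨ht1, ht2⟩ := Finset.mem_Icc.1 htmem
    have htp : t - 1 + 1 = t := Nat.succ_pred_eq_of_pos ht1
    have hrange : ∑ k ∈ Finset.range t, E k = S (t - 1) := by
      simp only [hSdef]; rw [htp]
    have hfx : f t = E t / S (t - 1) := by rw [hf t ht1 ht2, hrange]
    have hcard : (t : ℝ) * E t ≤ S (t - 1) := by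
      rw [← hrange]
      calc (t : ℝ) * E t = ∑ _k ∈ Finset.range t, E t := by
            rw [Finset.sum_const, Finset.card_range, nsmul_eq_mul]
        _ ≤ ∑ k ∈ Finset.range t, E k :=
            Finset.sum_le_sum (fun k hk => hEanti k t (le_of_lt (Finset.mem_range.1 hk)))
    have hkey := aux_key t ht1 (E t) (S (t - 1)) (hEpos t) (hSpos (t - 1)) hcard
    have hSt : S (t - 1) + E t = S t := by
      have h5 := hSsucc (t - 1)
      rw [htp] at h5; linarith
    rw [hfx]; rw [hSt] at hkey; exact hkey
  have tele : ∑ t ∈ Finset.Icc 1 T,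
      ((Real.log (S t) - Real.log (S (t - 1))) +
        ((Real.log (2 * t + 1) - Real.log (2 * t - 1)) -
          (Real.log ((t : ℝ) + 1) - Real.log t)))
      = Real.log (S T) + (Real.log (2 * T + 1) - Real.log (T + 1)) := by
    set F : ℕ → ℝ := fun n => Real.log (S n) + (Real.log (2 * n + 1) - Real.log (n + 1))
      with hFdef
    have : Finset.Icc 1 T = Finset.Ico 1 (T + 1) := by rw [Finset.Ico_add_one_right_eq_Icc]
    rw [this, Finset.sum_Ico_eq_sum_range]
    have hT1 : T + 1 - 1 = T := by omega
    rw [hT1]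
    have step : ∀ i ∈ Finset.range T,
        ((Real.log (S (1 + i)) - Real.log (S (1 + i - 1))) +
          ((Real.log (2 * (1 + i : ℕ) + 1) - Real.log (2 * (1 + i : ℕ) - 1)) -
            (Real.log (((1 + i : ℕ) : ℝ) + 1) - Real.log ((1 + i : ℕ) : ℝ))))
        = F (i + 1) - F i := by
      intro i _
      have e0 : (1 + i) - 1 = i := by omega
      have e1 : (2 * ((1 + i : ℕ) : ℝ) - 1) = 2 * (i : ℝ) + 1 := by push_cast; ring
      have e2 : (2 * ((1 + i : ℕ) : ℝ) + 1) = 2 * ((i : ℝ) + 1) + 1 := by push_cast; ring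
      have e3 : (((1 + i : ℕ) : ℝ) + 1) = ((i : ℝ) + 1) + 1 := by push_cast; ring
      have e4 : ((1 + i : ℕ) : ℝ) = (i : ℝ) + 1 := by push_cast; ring
      have e5 : (1 + i : ℕ) = i + 1 := by omega
      rw [e0, e1, e2, e3, e4, e5, hFdef]
      simp only []
      push_cast
      ring
    rw [Finset.sum_congr rfl step, Finset.sum_range_sub F T]
    have hF0 : F 0 = 0 := by
      simp [hFdef, hS0]
    rw [hF0, hFdef]
    push_cast
    ring
  calc ∑ t ∈ Finset.Icc 1 T, f t
      ≤ ∑ t ∈ Finset.Icc 1 T,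
        ((Real.log (S t) - Real.log (S (t - 1))) +
          ((Real.log (2 * t + 1) - Real.log (2 * t - 1)) -
            (Real.log ((t : ℝ) + 1) - Real.log t))) := Finset.sum_le_sum key
    _ = Real.log (S T) + (Real.log (2 * T + 1) - Real.log (T + 1)) := tele
    _ ≤ Real.log (2 * S T) := by
        rw [Real.log_mul (by norm_num) (ne_of_gt (hSpos T))]
        have h1 : Real.log (2 * (T : ℝ) + 1) ≤ Real.log (2 * ((T : ℝ) + 1)) := by
          apply Real.log_le_log (by positivity)
          linarith
        have h2 : Real.log (2 * ((T : ℝ) + 1)) = Real.log 2 + Real.log ((T : ℝ) + 1) := by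
          rw [Real.log_mul (by norm_num) (by positivity)]
        linarith


/-- With `τ_t = ∑_{s=1}^{t} exp(a ∑_{i=s}^{t} h_i)` for `1 ≤ t ≤ T`, one has
`∑_{t=1}^{T} 1/τ_t ≤ log(2 ∑_{t=0}^{T} exp(−a ∑_{s=1}^{t} h_s))`
(the `t = 0` summand on the right equals `1`). -/
theorem stmt12 (T : ℕ) (hT : 1 ≤ T) (a : ℝ) (ha : 0 < a) (h : ℕ → ℕ)
    (τ : ℕ → ℝ)
    (hτ : ∀ t, 1 ≤ t → t ≤ T →
      τ t = ∑ s ∈ Finset.Icc 1 t, Real.exp (a * ∑ i ∈ Finset.Icc s t, (h i : ℝ))) :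
    ∑ t ∈ Finset.Icc 1 T, 1 / τ t ≤
      Real.log (2 * ∑ t ∈ Finset.range (T + 1),
        Real.exp (-(a * ∑ s ∈ Finset.Icc 1 t, (h s : ℝ)))) := by
  set E : ℕ → ℝ := fun t => Real.exp (-(a * ∑ s ∈ Finset.Icc 1 t, (h s : ℝ))) with hEdef
  have hEpos : ∀ t, 0 < E t := fun t => Real.exp_pos _
  have hE0 : E 0 = 1 := by simp [hEdef]
  have hEanti : ∀ s t, s ≤ t → E t ≤ E s := by
    intro s t hst
    simp only [hEdef]
    apply Real.exp_le_exp.2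
    have hsum : ∑ i ∈ Finset.Icc 1 s, (h i : ℝ) ≤ ∑ i ∈ Finset.Icc 1 t, (h i : ℝ) := by
      apply Finset.sum_le_sum_of_subset_of_nonneg
      · exact Finset.Icc_subset_Icc_right hst
      · intros; positivity
    have := mul_le_mul_of_nonneg_left hsum ha.le
    linarith
  have hf : ∀ t, 1 ≤ t → t ≤ T → 1 / τ t = E t / ∑ k ∈ Finset.range t, E k := by
    intro t ht1 ht2
    have hterm : ∀ s ∈ Finset.Icc 1 t,
        Real.exp (a * ∑ i ∈ Finset.Icc s t, (h i : ℝ)) = E (s - 1) / E t := by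
      intro s hs
      obtain ⟨hs1, hst⟩ := Finset.mem_Icc.1 hs
      have hsplit : (∑ i ∈ Finset.Icc 1 (s - 1), (h i : ℝ)) + ∑ i ∈ Finset.Icc s t, (h i : ℝ)
          = ∑ i ∈ Finset.Icc 1 t, (h i : ℝ) := by
        have e1 : Finset.Icc 1 (s - 1) = Finset.Ioc 0 (s - 1) := (Finset.Icc_add_one_left_eq_Ioc 0 (s - 1))
        have e2 : Finset.Icc s t = Finset.Ioc (s - 1) t := by
          rw [← Finset.Icc_add_one_left_eq_Ioc]; congr 1; omega
        have e3 : Finset.Icc 1 t = Finset.Ioc 0 t := (Finset.Icc_add_one_left_eq_Ioc 0 t)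
        rw [e1, e2, e3]
        exact Finset.sum_Ioc_consecutive _ (Nat.zero_le _) (by omega)
      simp only [hEdef]
      rw [← Real.exp_sub]
      congr 1
      rw [← hsplit]
      ring
    rw [hτ t ht1 ht2, Finset.sum_congr rfl hterm, ← Finset.sum_div, one_div_div]
    congr 1
    have e4 : Finset.Icc 1 t = Finset.Ico 1 (t + 1) := by rw [Finset.Ico_add_one_right_eq_Icc]
    rw [e4, Finset.sum_Ico_eq_sum_range]
    have e5 : t + 1 - 1 = t := by omega
    rw [e5]
    apply Finset.sum_congr rfl
    intro i _
    congr 1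
    omega
  exact aux_main T E hEpos hE0 hEanti (fun t => 1 / τ t) hf
end

section
/- Let λ ∈ (0,1], let t ≥ 1 be an integer, let h_1, …, h_t be i.i.d. Bernoulli(λ) random variables, and let (Y_m)_{m≥1} be an i.i.d. sequence of real random variables, each with mean μ and σ̂²-sub-Gaussian (σ̂ > 0), with the sequence (Y_m) independent of (h_s). Set M := ∑_{s=1}^{t} h_s. Then for every ε > 0, ℙ{ M ≥ 1 and (1/M)∑_{m=1}^{M} Y_m > μ + ε } ≤ exp(−ε²λt/(4σ̂²)) + exp(−λt/10). -/
open MeasureTheory ProbabilityTheory Finset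

lemma aux_subg {Ω : Type*} [MeasurableSpace Ω] (μ : Measure Ω) [IsProbabilityMeasure μ]
    (X : Ω → ℝ) (hX : Measurable X) (c : ℝ) (hc : 0 ≤ c) (θ : ℝ)
    (hb : ∫⁻ ω, ENNReal.ofReal (Real.exp (θ * X ω)) ∂μ ≤ ENNReal.ofReal (Real.exp c)) :
    Integrable (fun ω => Real.exp (θ * X ω)) μ ∧ mgf X μ θ ≤ Real.exp c := by
  have hmeas : Measurable (fun ω => Real.exp (θ * X ω)) := (hX.const_mul θ).exp
  have hnn : 0 ≤ᵐ[μ] fun ω => Real.exp (θ * X ω) := ae_of_all _ fun ω => (Real.exp_pos _).le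
  have hint : Integrable (fun ω => Real.exp (θ * X ω)) μ := by
    refine ⟨hmeas.aestronglyMeasurable, ?_⟩
    rw [hasFiniteIntegral_iff_ofReal hnn]
    exact lt_of_le_of_lt hb ENNReal.ofReal_lt_top
  refine ⟨hint, ?_⟩
  have : mgf X μ θ = (∫⁻ ω, ENNReal.ofReal (Real.exp (θ * X ω)) ∂μ).toReal := by
    rw [mgf, integral_eq_lintegral_of_nonneg_ae hnn hmeas.aestronglyMeasurable]
  rw [this]
  calc (∫⁻ ω, ENNReal.ofReal (Real.exp (θ * X ω)) ∂μ).toReal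
      ≤ (ENNReal.ofReal (Real.exp c)).toReal :=
        ENNReal.toReal_mono ENNReal.ofReal_ne_top hb
    _ = Real.exp c := ENNReal.toReal_ofReal (Real.exp_pos _).le

lemma aux_bern {Ω : Type*} [MeasurableSpace Ω] (μ : Measure Ω) [IsProbabilityMeasure μ]
    (f : Ω → ℕ) (hf : Measurable f) (lam : ℝ) (hl0 : 0 ≤ lam) (hl1 : lam ≤ 1)
    (h1 : μ {ω | f ω = 1} = ENNReal.ofReal lam)
    (h0 : μ {ω | f ω = 0} = ENNReal.ofReal (1 - lam)) (θ : ℝ) :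
    Integrable (fun ω => Real.exp (θ * (f ω : ℝ))) μ ∧
      mgf (fun ω => (f ω : ℝ)) μ θ = (1 - lam) + lam * Real.exp θ := by
  set A : Set Ω := f ⁻¹' {1} with hA
  set B : Set Ω := f ⁻¹' {0} with hB
  have hAm : MeasurableSet A := hf (measurableSet_singleton 1)
  have hBm : MeasurableSet B := hf (measurableSet_singleton 0)
  have hAμ : μ A = ENNReal.ofReal lam := h1
  have hBμ : μ B = ENNReal.ofReal (1 - lam) := h0
  have hdisj : Disjoint A B := by
    rw [Set.disjoint_left]; intro ω hωA hωB
    simp only [hA, hB, Set.mem_preimage, Set.mem_singleton_iff] at hωA hωB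
    omega
  have hunion : μ (A ∪ B) = 1 := by
    rw [measure_union hdisj hBm, hAμ, hBμ, ← ENNReal.ofReal_add hl0 (by linarith)]
    norm_num
  have hcompl : μ (A ∪ B)ᶜ = 0 := by
    rw [measure_compl (hAm.union hBm) (measure_ne_top _ _), hunion, measure_univ, tsub_self]
  have hae : ∀ᵐ ω ∂μ, ω ∈ A ∪ B := by
    rw [ae_iff]
    convert hcompl using 2
    rfl
  set g : Ω → ℝ := (A.indicator fun _ => Real.exp θ) + (B.indicator fun _ => (1:ℝ)) with hg
  have haeeq : (fun ω => Real.exp (θ * (f ω : ℝ))) =ᵐ[μ] g := by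
    filter_upwards [hae] with ω hω
    rcases hω with hω | hω
    · have h1' : f ω = 1 := hω
      have h2' : ω ∉ B := by simp [hB, Set.mem_preimage, h1']
      simp [hg, Set.indicator_of_mem hω, Set.indicator_of_notMem h2', h1']
    · have h1' : f ω = 0 := hω
      have h2' : ω ∉ A := by simp [hA, Set.mem_preimage, h1']
      simp [hg, Set.indicator_of_mem hω, Set.indicator_of_notMem h2', h1']
  have hintg : Integrable g μ :=
    ((integrable_const _).indicator hAm).add ((integrable_const _).indicator hBm)
  have hint : Integrable (fun ω => Real.exp (θ * (f ω : ℝ))) μ :=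
    hintg.congr haeeq.symm
  refine ⟨hint, ?_⟩
  have : mgf (fun ω => (f ω : ℝ)) μ θ = ∫ ω, g ω ∂μ := integral_congr_ae haeeq
  rw [this, hg]
  simp only [Pi.add_apply]
  rw [integral_add ((integrable_const _).indicator hAm) ((integrable_const _).indicator hBm),
    integral_indicator_const _ hAm, integral_indicator_const _ hBm, measureReal_def, measureReal_def, hAμ, hBμ,
    ENNReal.toReal_ofReal hl0, ENNReal.toReal_ofReal (by linarith)]
  simp [smul_eq_mul]; ring

lemma tailY {Ω : Type*} [MeasurableSpace Ω] (μ : Measure Ω) [IsProbabilityMeasure μ]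
    (Y : ℕ → Ω → ℝ) (m0 : ℝ) (sg : ℝ) (hsg0 : 0 < sg)
    (hYmeas : ∀ m, 1 ≤ m → Measurable (Y m))
    (hYind : iIndepFun (fun (m : ℕ) ω => Y (m + 1) ω) μ)
    (hYsg : ∀ m, 1 ≤ m → ∀ θ : ℝ,
      ∫⁻ ω, ENNReal.ofReal (Real.exp (θ * (Y m ω - m0))) ∂μ ≤
        ENNReal.ofReal (Real.exp (sg ^ 2 * θ ^ 2 / 2)))
    (ε : ℝ) (hε : 0 < ε) (m : ℕ) :
    μ {ω | (m : ℝ) * ε ≤ (∑ i ∈ Finset.range m, fun ω => Y (i + 1) ω - m0) ω} ≤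
      ENNReal.ofReal (Real.exp (-((m : ℝ) * ε ^ 2) / (2 * sg ^ 2))) := by
  set X : ℕ → Ω → ℝ := fun i ω => Y (i + 1) ω - m0 with hX
  set θ : ℝ := ε / sg ^ 2 with hθdef
  have hθ : 0 ≤ θ := le_of_lt (div_pos hε (by positivity))
  have hXmeas : ∀ i, Measurable (X i) := fun i =>
    (hYmeas (i + 1) (Nat.le_add_left 1 i)).sub measurable_const
  have hXind : iIndepFun X μ :=
    hYind.comp (fun _ x => x - m0) (fun _ => measurable_id.sub_const m0)
  have hc : (0:ℝ) ≤ sg ^ 2 * θ ^ 2 / 2 := by positivity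
  have hsub : ∀ i : ℕ, Integrable (fun ω => Real.exp (θ * X i ω)) μ ∧
      mgf (X i) μ θ ≤ Real.exp (sg ^ 2 * θ ^ 2 / 2) := fun i =>
    aux_subg μ (X i) (hXmeas i) _ hc θ (hYsg (i + 1) (Nat.le_add_left 1 i) θ)
  have hintsum : Integrable (fun ω => Real.exp (θ * (∑ i ∈ Finset.range m, X i) ω)) μ :=
    hXind.integrable_exp_mul_sum hXmeas (fun i _ => (hsub i).1)
  have hch := measure_ge_le_exp_mul_mgf (X := ∑ i ∈ Finset.range m, X i) (μ := μ)
    ((m : ℝ) * ε) hθ hintsum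
  have hmgf : mgf (∑ i ∈ Finset.range m, X i) μ θ ≤ Real.exp (sg ^ 2 * θ ^ 2 / 2) ^ m := by
    rw [hXind.mgf_sum hXmeas]
    calc ∏ i ∈ Finset.range m, mgf (X i) μ θ
        ≤ ∏ _i ∈ Finset.range m, Real.exp (sg ^ 2 * θ ^ 2 / 2) :=
          Finset.prod_le_prod (fun i _ => mgf_nonneg) (fun i _ => (hsub i).2)
      _ = Real.exp (sg ^ 2 * θ ^ 2 / 2) ^ m := by
          rw [Finset.prod_const, Finset.card_range]
  have hkey : (μ {ω | (m : ℝ) * ε ≤ (∑ i ∈ Finset.range m, X i) ω}).toReal ≤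
      Real.exp (-((m : ℝ) * ε ^ 2) / (2 * sg ^ 2)) := by
    refine hch.trans ?_
    calc Real.exp (-θ * ((m : ℝ) * ε)) * mgf (∑ i ∈ Finset.range m, X i) μ θ
        ≤ Real.exp (-θ * ((m : ℝ) * ε)) * Real.exp (sg ^ 2 * θ ^ 2 / 2) ^ m := by
          gcongr
      _ = Real.exp (-θ * ((m : ℝ) * ε) + (m : ℝ) * (sg ^ 2 * θ ^ 2 / 2)) := by
          rw [← Real.exp_nat_mul, ← Real.exp_add]
      _ = Real.exp (-((m : ℝ) * ε ^ 2) / (2 * sg ^ 2)) := by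
          congr 1
          rw [hθdef]
          field_simp
          ring
  rw [show {ω | (m : ℝ) * ε ≤ (∑ i ∈ Finset.range m, fun ω => Y (i + 1) ω - m0) ω} =
      {ω | (m : ℝ) * ε ≤ (∑ i ∈ Finset.range m, X i) ω} from rfl]
  exact (ENNReal.le_ofReal_iff_toReal_le (measure_ne_top _ _) (Real.exp_pos _).le).mpr hkey

lemma tailM {Ω : Type*} [MeasurableSpace Ω] (μ : Measure Ω) [IsProbabilityMeasure μ]
    (lam : ℝ) (hlam0 : 0 < lam) (hlam1 : lam ≤ 1) (t : ℕ) (ht : 1 ≤ t)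
    (h : ℕ → Ω → ℕ)
    (hhmeas : ∀ s, 1 ≤ s → s ≤ t → Measurable (h s))
    (hhind : iIndepFun (fun (i : Fin t) ω => h ((i : ℕ) + 1) ω) μ)
    (hber1 : ∀ s, 1 ≤ s → s ≤ t → μ {ω | h s ω = 1} = ENNReal.ofReal lam)
    (hber0 : ∀ s, 1 ≤ s → s ≤ t → μ {ω | h s ω = 0} = ENNReal.ofReal (1 - lam)) :
    μ {ω | (∑ i : Fin t, fun ω => ((h ((i : ℕ) + 1) ω : ℕ) : ℝ)) ω ≤ lam * t / 2} ≤
      ENNReal.ofReal (Real.exp (-(lam * t) / 10)) := by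
  set g : Fin t → Ω → ℝ := fun i ω => ((h ((i : ℕ) + 1) ω : ℕ) : ℝ) with hg
  have hbd : ∀ i : Fin t, 1 ≤ (i : ℕ) + 1 ∧ (i : ℕ) + 1 ≤ t := fun i =>
    ⟨Nat.le_add_left 1 i, i.isLt⟩
  have hgmeas : ∀ i, Measurable (g i) := fun i =>
    measurable_from_top.comp (hhmeas _ (hbd i).1 (hbd i).2)
  have hgind : iIndepFun g μ :=
    hhind.comp (fun _ (n : ℕ) => (n : ℝ)) (fun _ => measurable_from_top)
  set θ : ℝ := -Real.log 2 with hθdef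
  have hθ : θ ≤ 0 := neg_nonpos.mpr (Real.log_nonneg one_le_two)
  have hsub : ∀ i : Fin t, Integrable (fun ω => Real.exp (θ * g i ω)) μ ∧
      mgf (g i) μ θ = (1 - lam) + lam * Real.exp θ := fun i =>
    aux_bern μ (h ((i : ℕ) + 1)) (hhmeas _ (hbd i).1 (hbd i).2) lam hlam0.le hlam1
      (hber1 _ (hbd i).1 (hbd i).2) (hber0 _ (hbd i).1 (hbd i).2) θ
  have hintsum : Integrable (fun ω => Real.exp (θ * (∑ i : Fin t, g i) ω)) μ :=
    hgind.integrable_exp_mul_sum hgmeas (fun i _ => (hsub i).1)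
  have hch := measure_le_le_exp_mul_mgf (X := ∑ i : Fin t, g i) (μ := μ)
    (lam * t / 2) hθ hintsum
  have hexpθ : Real.exp θ = 1 / 2 := by
    rw [hθdef, Real.exp_neg, Real.exp_log two_pos]
    norm_num
  have hmgf : mgf (∑ i : Fin t, g i) μ θ = (1 - lam / 2) ^ t := by
    rw [hgind.mgf_sum hgmeas]
    calc ∏ i : Fin t, mgf (g i) μ θ = ∏ _i : Fin t, ((1 - lam) + lam * Real.exp θ) :=
          Finset.prod_congr rfl (fun i _ => (hsub i).2)
      _ = ((1 - lam) + lam * Real.exp θ) ^ t := by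
          rw [Finset.prod_const, Finset.card_univ, Fintype.card_fin]
      _ = (1 - lam / 2) ^ t := by rw [hexpθ]; ring_nf
  have htpos : (0:ℝ) < t := by exact_mod_cast ht
  have hkey : (μ {ω | (∑ i : Fin t, g i) ω ≤ lam * t / 2}).toReal ≤
      Real.exp (-(lam * t) / 10) := by
    refine hch.trans ?_
    rw [hmgf]
    have h1 : (1 - lam / 2) ^ t ≤ Real.exp (-(lam / 2)) ^ t := by
      apply pow_le_pow_left₀ (by linarith) ?_ t
      linarith [Real.add_one_le_exp (-(lam / 2))]
    calc Real.exp (-θ * (lam * t / 2)) * (1 - lam / 2) ^ t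
        ≤ Real.exp (-θ * (lam * t / 2)) * Real.exp (-(lam / 2)) ^ t :=
          mul_le_mul_of_nonneg_left h1 (Real.exp_pos _).le
      _ = Real.exp (-θ * (lam * t / 2) + t * (-(lam / 2))) := by
          rw [← Real.exp_nat_mul, ← Real.exp_add]
      _ ≤ Real.exp (-(lam * t) / 10) := by
          apply Real.exp_le_exp.mpr
          rw [hθdef]
          have hlog : Real.log 2 < 0.6931471808 := Real.log_two_lt_d9
          nlinarith [mul_pos hlam0 htpos]
  exact (ENNReal.le_ofReal_iff_toReal_le (measure_ne_top _ _) (Real.exp_pos _).le).mpr hkey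


/-- Let `h_1, …, h_t` be i.i.d. Bernoulli(λ) with `λ ∈ (0,1]`, and `(Y_m)_{m ≥ 1}` an
i.i.d. sequence of `σ̂²`-sub-Gaussian variables with mean `m0`, independent of the `h`'s.
With `M = ∑_{s=1}^{t} h_s`, for every `ε > 0`:
`ℙ{M ≥ 1 and (1/M)∑_{m=1}^{M} Y_m > m0 + ε} ≤ exp(−ε²λt/(4σ̂²)) + exp(−λt/10)`. -/
theorem stmt19 {Ω : Type*} [MeasurableSpace Ω] (μ : Measure Ω) [IsProbabilityMeasure μ]
    (lam : ℝ) (hlam0 : 0 < lam) (hlam1 : lam ≤ 1) (t : ℕ) (ht : 1 ≤ t)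
    (h : ℕ → Ω → ℕ) (Y : ℕ → Ω → ℝ) (m0 : ℝ) (sg : ℝ) (hsg0 : 0 < sg)
    (hhmeas : ∀ s, 1 ≤ s → s ≤ t → Measurable (h s))
    (hhind : iIndepFun (fun (i : Fin t) ω => h ((i : ℕ) + 1) ω) μ)
    (hber1 : ∀ s, 1 ≤ s → s ≤ t → μ {ω | h s ω = 1} = ENNReal.ofReal lam)
    (hber0 : ∀ s, 1 ≤ s → s ≤ t → μ {ω | h s ω = 0} = ENNReal.ofReal (1 - lam))
    (hYmeas : ∀ m, 1 ≤ m → Measurable (Y m))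
    (hYind : iIndepFun (fun (m : ℕ) ω => Y (m + 1) ω) μ)
    (hYid : ∀ m, 1 ≤ m → IdentDistrib (Y m) (Y 1) μ μ)
    (hYint : ∀ m, 1 ≤ m → Integrable (Y m) μ)
    (hYmean : ∀ m, 1 ≤ m → ∫ ω, Y m ω ∂μ = m0)
    (hYsg : ∀ m, 1 ≤ m → ∀ θ : ℝ,
      ∫⁻ ω, ENNReal.ofReal (Real.exp (θ * (Y m ω - m0))) ∂μ ≤
        ENNReal.ofReal (Real.exp (sg ^ 2 * θ ^ 2 / 2)))
    (hYh : IndepFun (fun ω (m : ℕ) => Y m ω) (fun ω (s : ℕ) => h s ω) μ)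
    (M : Ω → ℕ) (hM : ∀ ω, M ω = ∑ s ∈ Finset.Icc 1 t, h s ω)
    (ε : ℝ) (hε : 0 < ε) :
    μ {ω | 1 ≤ M ω ∧
        m0 + ε < (1 / (M ω : ℝ)) * ∑ m ∈ Finset.Icc 1 (M ω), Y m ω} ≤
      ENNReal.ofReal (Real.exp (-(ε ^ 2 * lam * t) / (4 * sg ^ 2)) +
        Real.exp (-(lam * t) / 10)) := by
  classical
  set e1 : ℝ := Real.exp (-(ε ^ 2 * lam * t) / (4 * sg ^ 2)) with he1
  set e2 : ℝ := Real.exp (-(lam * t) / 10) with he2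
  -- basic measurability
  have hMmeas : Measurable M := by
    have : M = fun ω => ∑ s ∈ Finset.Icc 1 t, h s ω := funext hM
    rw [this]
    exact Finset.measurable_sum _ (fun s hs => by
      rw [Finset.mem_Icc] at hs; exact hhmeas s hs.1 hs.2)
  -- Icc-to-range sum conversion
  have hIccRange : ∀ (n : ℕ) (f : ℕ → ℝ),
      ∑ s ∈ Finset.Icc 1 n, f s = ∑ i ∈ Finset.range n, f (i + 1) := by
    intro n f
    rw [← Finset.Ico_add_one_right_eq_Icc, Finset.sum_Ico_eq_sum_range]
    simp [add_comm]
  have hIccRangeN : ∀ (n : ℕ) (f : ℕ → ℕ),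
      ∑ s ∈ Finset.Icc 1 n, f s = ∑ i ∈ Finset.range n, f (i + 1) := by
    intro n f
    rw [← Finset.Ico_add_one_right_eq_Icc, Finset.sum_Ico_eq_sum_range]
    simp [add_comm]
  -- the null set where some h is ≥ 2
  set N : Set Ω := ⋃ s ∈ Finset.Icc 1 t, {ω | 2 ≤ h s ω} with hN
  have hNnull : μ N = 0 := by
    rw [hN]
    refine le_antisymm (le_trans (measure_biUnion_finset_le _ _) ?_) (zero_le)
    rw [← Finset.sum_const_zero (s := Finset.Icc 1 t)]
    apply Finset.sum_le_sum
    intro s hs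
    rw [Finset.mem_Icc] at hs
    -- μ {2 ≤ h s} = 0
    have hdisj : Disjoint ({ω | h s ω = 1}) ({ω | h s ω = 0}) := by
      rw [Set.disjoint_left]; intro ω h1 h0
      simp only [Set.mem_setOf_eq] at h1 h0; omega
    have hunion : μ ({ω | h s ω = 1} ∪ {ω | h s ω = 0}) = 1 := by
      rw [measure_union hdisj ((hhmeas s hs.1 hs.2) (measurableSet_singleton 0)),
        hber1 s hs.1 hs.2, hber0 s hs.1 hs.2,
        ← ENNReal.ofReal_add hlam0.le (by linarith)]
      norm_num
    have hcompl : μ ({ω | h s ω = 1} ∪ {ω | h s ω = 0})ᶜ = 0 := by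
      have hms : MeasurableSet ({ω | h s ω = 1} ∪ {ω | h s ω = 0}) := by
        apply MeasurableSet.union
        · exact (hhmeas s hs.1 hs.2) (measurableSet_singleton 1)
        · exact (hhmeas s hs.1 hs.2) (measurableSet_singleton 0)
      rw [measure_compl hms (measure_ne_top _ _), hunion, measure_univ, tsub_self]
    refine le_trans (measure_mono ?_) hcompl.le
    intro ω hω
    simp only [Set.mem_setOf_eq] at hω
    simp only [Set.mem_compl_iff, Set.mem_union, Set.mem_setOf_eq]
    omega
  -- bad set: M too small
  set Bad : Set Ω := {ω | (M ω : ℝ) ≤ lam * t / 2} with hBadDef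
  have hMcast : ∀ ω, (M ω : ℝ) =
      (∑ i : Fin t, fun ω => ((h ((i : ℕ) + 1) ω : ℕ) : ℝ)) ω := by
    intro ω
    rw [Finset.sum_apply, hM ω]
    push_cast
    rw [hIccRange t (fun s => (h s ω : ℝ)), ← Fin.sum_univ_eq_sum_range]
  have hBad : μ Bad ≤ ENNReal.ofReal e2 := by
    have hset : Bad = {ω | (∑ i : Fin t, fun ω => ((h ((i : ℕ) + 1) ω : ℕ) : ℝ)) ω ≤
        lam * t / 2} := by
      ext ω; simp only [hBadDef, Set.mem_setOf_eq, hMcast ω]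
    rw [hset, he2]
    exact tailM μ lam hlam0 hlam1 t ht h hhmeas hhind hber1 hber0
  -- tail events for each m
  set T : ℕ → Set Ω := fun m =>
    if lam * t / 2 ≤ (m : ℝ) then
      ({ω | M ω = m} ∩ {ω | (m : ℝ) * ε ≤ ∑ i ∈ Finset.range m, (Y (i + 1) ω - m0)})
    else ∅ with hT
  -- independence of tail from M
  have hTm : ∀ m : ℕ, μ (T m) ≤ μ {ω | M ω = m} * ENNReal.ofReal e1 := by
    intro m
    simp only [hT]
    by_cases hcond : lam * t / 2 ≤ (m : ℝ)
    · rw [if_pos hcond]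
      set φ : (ℕ → ℝ) → ℝ := fun f => ∑ i ∈ Finset.range m, (f (i + 1) - m0) with hφ
      set ψ : (ℕ → ℕ) → ℕ := fun f => ∑ s ∈ Finset.Icc 1 t, f s with hψ
      have hφm : Measurable φ :=
        Finset.measurable_sum _ (fun i _ => (measurable_pi_apply (i + 1)).sub measurable_const)
      have hψm : Measurable ψ :=
        Finset.measurable_sum _ (fun s _ => measurable_pi_apply s)
      have hcomp := hYh.comp hφm hψm
      have hMeq2 : (ψ ∘ fun ω (s : ℕ) => h s ω) = M := by
        funext ω; exact (hM ω).symm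
      have hSeq : (φ ∘ fun ω (m : ℕ) => Y m ω) =
          fun ω => ∑ i ∈ Finset.range m, (Y (i + 1) ω - m0) := rfl
      rw [hMeq2, hSeq] at hcomp
      have hkey := hcomp.measure_inter_preimage_eq_mul (Set.Ici ((m : ℝ) * ε)) {m}
        measurableSet_Ici (measurableSet_singleton m)
      have hseteq : {ω | M ω = m} ∩
          {ω | (m : ℝ) * ε ≤ ∑ i ∈ Finset.range m, (Y (i + 1) ω - m0)} =
          (fun ω => ∑ i ∈ Finset.range m, (Y (i + 1) ω - m0)) ⁻¹' Set.Ici ((m : ℝ) * ε) ∩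
            M ⁻¹' {m} := by
        ext ω
        simp only [Set.mem_inter_iff, Set.mem_setOf_eq, Set.mem_preimage, Set.mem_Ici,
          Set.mem_singleton_iff]
        tauto
      rw [hseteq, hkey]
      rw [mul_comm]
      apply mul_le_mul'
      · apply le_of_eq; rfl
      · -- tail bound via tailY
        have hset2 : (fun ω => ∑ i ∈ Finset.range m, (Y (i + 1) ω - m0)) ⁻¹'
            Set.Ici ((m : ℝ) * ε) =
            {ω | (m : ℝ) * ε ≤ (∑ i ∈ Finset.range m, fun ω => Y (i + 1) ω - m0) ω} := by
          ext ω
          simp [Set.mem_preimage, Set.mem_Ici, Finset.sum_apply]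
        rw [hset2]
        refine le_trans (tailY μ Y m0 sg hsg0 hYmeas hYind hYsg ε hε m) ?_
        apply ENNReal.ofReal_le_ofReal
        apply Real.exp_le_exp.mpr
        rw [div_le_div_iff₀ (by positivity) (by positivity)]
        nlinarith [sq_nonneg ε, sq_nonneg sg, hε.le, mul_le_mul_of_nonneg_left hcond
          (mul_pos hε hε).le]
    · rw [if_neg hcond]
      simp
  -- the inclusion
  have hsubset : {ω | 1 ≤ M ω ∧
      m0 + ε < (1 / (M ω : ℝ)) * ∑ m ∈ Finset.Icc 1 (M ω), Y m ω} ⊆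
      N ∪ (Bad ∪ ⋃ m ∈ Finset.Icc 1 t, T m) := by
    intro ω hω
    obtain ⟨h1, h2⟩ := hω
    by_cases hNmem : ω ∈ N
    · exact Or.inl hNmem
    by_cases hBmem : (M ω : ℝ) ≤ lam * t / 2
    · exact Or.inr (Or.inl hBmem)
    right; right
    push_neg at hBmem
    have hMt : M ω ≤ t := by
      rw [hM ω]
      calc ∑ s ∈ Finset.Icc 1 t, h s ω ≤ ∑ s ∈ Finset.Icc 1 t, 1 := by
            apply Finset.sum_le_sum
            intro s hs
            by_contra hlt
            push_neg at hlt
            apply hNmem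
            rw [hN]
            exact Set.mem_biUnion hs (by simp only [Set.mem_setOf_eq]; omega)
        _ = t := by rw [Finset.sum_const, smul_eq_mul, mul_one, Nat.card_Icc]; omega
    refine Set.mem_biUnion (Finset.mem_Icc.mpr ⟨h1, hMt⟩) ?_
    simp only [hT, if_pos hBmem.le]
    refine ⟨rfl, ?_⟩
    simp only [Set.mem_setOf_eq]
    have hMpos : (0:ℝ) < (M ω : ℝ) := by exact_mod_cast h1
    have h2' : (M ω : ℝ) * (m0 + ε) < ∑ m ∈ Finset.Icc 1 (M ω), Y m ω := by
      rw [one_div] at h2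
      exact (lt_inv_mul_iff₀ hMpos).mp h2
    have hsum : ∑ m ∈ Finset.Icc 1 (M ω), Y m ω = ∑ i ∈ Finset.range (M ω), Y (i + 1) ω :=
      hIccRange (M ω) (fun s => Y s ω)
    have hSsub : ∑ i ∈ Finset.range (M ω), (Y (i + 1) ω - m0) =
        (∑ i ∈ Finset.range (M ω), Y (i + 1) ω) - (M ω : ℝ) * m0 := by
      rw [Finset.sum_sub_distrib, Finset.sum_const, Finset.card_range, nsmul_eq_mul]
    rw [hSsub, ← hsum]
    nlinarith
  -- assemble
  refine le_trans (measure_mono hsubset) ?_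
  refine le_trans (measure_union_le _ _) ?_
  rw [hNnull, zero_add]
  refine le_trans (measure_union_le _ _) ?_
  have hU : μ (⋃ m ∈ Finset.Icc 1 t, T m) ≤ ENNReal.ofReal e1 := by
    refine le_trans (measure_biUnion_finset_le _ _) ?_
    calc ∑ m ∈ Finset.Icc 1 t, μ (T m)
        ≤ ∑ m ∈ Finset.Icc 1 t, μ {ω | M ω = m} * ENNReal.ofReal e1 :=
          Finset.sum_le_sum (fun m _ => hTm m)
      _ = (∑ m ∈ Finset.Icc 1 t, μ {ω | M ω = m}) * ENNReal.ofReal e1 := by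
          rw [Finset.sum_mul]
      _ ≤ 1 * ENNReal.ofReal e1 := by
          apply mul_le_mul'
          · have hdisj : (↑(Finset.Icc 1 t) : Set ℕ).PairwiseDisjoint
                (fun m => {ω | M ω = m}) := by
              intro a _ b _ hab
              simp only [Function.onFun, Set.disjoint_left]
              intro ω ha hb
              simp only [Set.mem_setOf_eq] at ha hb
              exact hab (ha ▸ hb ▸ rfl)
            rw [← measure_biUnion_finset hdisj
              (fun m _ => hMmeas (measurableSet_singleton m))]
            exact prob_le_one
          · exact le_refl _
      _ = ENNReal.ofReal e1 := one_mul _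
  calc μ Bad + μ (⋃ m ∈ Finset.Icc 1 t, T m)
      ≤ ENNReal.ofReal e2 + ENNReal.ofReal e1 := add_le_add hBad hU
    _ = ENNReal.ofReal (e1 + e2) := by
        rw [← ENNReal.ofReal_add (by rw [he2]; positivity) (by rw [he1]; positivity), add_comm]
end
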